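/- arXiv:2206.14622 — 3 statements merged into one kernel-verified Lean document; each statement's English description precedes it below -/
import Mathlib

section
/- Let (∧V, d) be a simply connected Sullivan minimal model admitting a DG algebra factorization (∧V, d) ≅ (∧(y), 0) ⊗ (∧W, d) for some y ∈ V^{2m} of even degree (i.e., V = ⟨y⟩ ⊕ W, dy = 0, and d(∧W) ⊆ ∧W). Let θ ∈ Der_{2m}(∧V) be the derivation dual to y, with θ(y) = 1 and θ(W) = 0 (a D-cycle). If the class [θ] is not a zero divisor in the graded Lie algebra H_*(Der(∧V), D) — i.e., there is no class c ∉ ⟨[θ]⟩ with [[θ], c] = 0 — then H_{≥2m}(Der(∧V), D) = ⟨[θ]⟩: every derivation cycle of degree ≥ 2m whose class does not lie in the span of [θ] is a D-boundary. -/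
/-! Common definitions: Sullivan minimal models over ℚ, graded derivations, etc. -/

/-- A bundled graded ℚ-algebra (used as target for universal properties and
formality). -/
structure GCAlg : Type 1 where
  carrier : Type
  [ring : Ring carrier]
  [alg : Algebra ℚ carrier]
  grading : ℤ → Submodule ℚ carrier

attribute [instance] GCAlg.ring GCAlg.alg

variable {A : Type} [Ring A] [Algebra ℚ A]

/-- Graded commutativity with Koszul signs. -/
def GradedComm (𝒜 : ℤ → Submodule ℚ A) : Prop :=
  ∀ i j : ℤ, ∀ a ∈ 𝒜 i, ∀ b ∈ 𝒜 j, a * b = ((-1 : ℚ) ^ (i * j)) • (b * a)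

/-- `θ` is a derivation of (lowering) degree `n` of the graded algebra `(A, 𝒜)`:
it maps `𝒜 i` into `𝒜 (i - n)` and satisfies the graded Leibniz rule. -/
structure IsDegDer (𝒜 : ℤ → Submodule ℚ A) (n : ℤ) (θ : A →ₗ[ℚ] A) : Prop where
  maps_mem : ∀ i : ℤ, ∀ a ∈ 𝒜 i, θ a ∈ 𝒜 (i - n)
  leibniz : ∀ i j : ℤ, ∀ a ∈ 𝒜 i, ∀ b ∈ 𝒜 j,
    θ (a * b) = θ a * b + ((-1 : ℚ) ^ (i * n)) • (a * θ b)

/-- `D θ = [d, θ] = d ∘ θ - (-1)^n θ ∘ d`, for `θ` of lowering degree `n`. -/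
def Dcomm (d θ : A →ₗ[ℚ] A) (n : ℤ) : A →ₗ[ℚ] A :=
  d ∘ₗ θ - ((-1 : ℚ) ^ n) • (θ ∘ₗ d)

/-- A derivation cycle of degree `n`. -/
def IsDerCycle (𝒜 : ℤ → Submodule ℚ A) (d : A →ₗ[ℚ] A) (n : ℤ) (θ : A →ₗ[ℚ] A) : Prop :=
  IsDegDer 𝒜 n θ ∧ Dcomm d θ n = 0

/-- Graded commutator of derivations of degrees `m` and `k`. -/
def gBracket (θ φ : A →ₗ[ℚ] A) (m k : ℤ) : A →ₗ[ℚ] A :=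
  θ ∘ₗ φ - ((-1 : ℚ) ^ (m * k)) • (φ ∘ₗ θ)

/-- The positive-degree part of a graded algebra. -/
def posPart (𝒜 : ℤ → Submodule ℚ A) : Submodule ℚ A := ⨆ i > (0 : ℤ), 𝒜 i

/-- The universal property of the free graded-commutative algebra on `V`. -/
def IsFreeGCA (𝒜 V : ℤ → Submodule ℚ A) : Prop :=
  ∀ B : GCAlg, GradedComm B.grading →
    ∀ f : A →ₗ[ℚ] B.carrier, (∀ n : ℤ, ∀ v ∈ V n, f v ∈ B.grading n) →
      ∃! g : A →ₐ[ℚ] B.carrier, ∀ n : ℤ, ∀ v ∈ V n, g v = f v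

/-- The data of a simply connected Sullivan minimal model `(∧V, d)` over ℚ:
`A` is a graded-commutative graded ℚ-algebra, free on the graded subspace `V`
(with `V⁰ = V¹ = 0`, each `Vⁿ` finite-dimensional), and `d` is a degree `+1`
derivation with `d ∘ d = 0` and decomposable image. -/
structure SullivanData (𝒜 V : ℤ → Submodule ℚ A) (d : A →ₗ[ℚ] A) : Prop where
  gcomm : GradedComm 𝒜
  one_mem : (1 : A) ∈ 𝒜 0
  mul_mem : ∀ i j : ℤ, ∀ a ∈ 𝒜 i, ∀ b ∈ 𝒜 j, a * b ∈ 𝒜 (i + j)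
  internal : DirectSum.IsInternal fun i : ℤ => 𝒜 i
  neg_bot : ∀ i : ℤ, i < 0 → 𝒜 i = ⊥
  V_le : ∀ n : ℤ, V n ≤ 𝒜 n
  V_zero : V 0 = ⊥
  V_one : V 1 = ⊥
  V_fin : ∀ n : ℤ, Module.Finite ℚ (V n)
  gen : Algebra.adjoin ℚ (⋃ n : ℤ, (V n : Set A)) = ⊤
  free : IsFreeGCA 𝒜 V
  d_der : IsDegDer 𝒜 (-1) d
  d_squared : d ∘ₗ d = 0
  d_decomposable : ∀ a : A, d a ∈ posPart 𝒜 * posPart 𝒜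

/-- `W` is a graded complement of the line spanned by `x` (a generator of degree `t`)
inside the graded space of generators `V`. -/
def IsGradedComplement (V : ℤ → Submodule ℚ A) (x : A) (t : ℤ)
    (W : ℤ → Submodule ℚ A) : Prop :=
  (∀ m, W m ≤ V m) ∧ (∀ m, m ≠ t → W m = V m) ∧
  (W t ⊔ Submodule.span ℚ {x} = V t) ∧ (W t ⊓ Submodule.span ℚ {x} = ⊥)

/-- `W` is a graded complement of the two lines spanned by `x` (degree `s`) and
`y` (degree `t`) inside `V`. -/
def IsGradedComplement₂ (V : ℤ → Submodule ℚ A) (x : A) (s : ℤ) (y : A) (t : ℤ)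
    (W : ℤ → Submodule ℚ A) : Prop :=
  (∀ m, W m ≤ V m) ∧ (∀ m, m ≠ s → m ≠ t → W m = V m) ∧
  (W s ⊔ Submodule.span ℚ {x} = V s) ∧ (W s ⊓ Submodule.span ℚ {x} = ⊥) ∧
  (W t ⊔ Submodule.span ℚ {y} = V t) ∧ (W t ⊓ Submodule.span ℚ {y} = ⊥)

/-- The subalgebra `∧W` generated by a graded family of generators `W`. -/
def gradedAdjoin (W : ℤ → Submodule ℚ A) : Subalgebra ℚ A :=
  Algebra.adjoin ℚ (⋃ k : ℤ, (W k : Set A))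

/-- `θ` restricts to a derivation of (lowering) degree `n` of the subalgebra `S`. -/
def IsDegDerOn (𝒜 : ℤ → Submodule ℚ A) (S : Subalgebra ℚ A) (n : ℤ)
    (θ : A →ₗ[ℚ] A) : Prop :=
  (∀ a ∈ S, θ a ∈ S) ∧
  (∀ i : ℤ, ∀ a ∈ S, a ∈ 𝒜 i → θ a ∈ 𝒜 (i - n)) ∧
  (∀ i j : ℤ, ∀ a ∈ S, ∀ b ∈ S, a ∈ 𝒜 i → b ∈ 𝒜 j →
    θ (a * b) = θ a * b + ((-1 : ℚ) ^ (i * n)) • (a * θ b))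

/-- Formality: there is a quasi-isomorphism of DG algebras from `(A, d)` onto a
graded algebra with zero differential (its cohomology). -/
def IsFormal (𝒜 : ℤ → Submodule ℚ A) (d : A →ₗ[ℚ] A) : Prop :=
  ∃ (T : GCAlg) (ρ : A →ₐ[ℚ] T.carrier),
    (∀ i : ℤ, ∀ a ∈ 𝒜 i, ρ a ∈ T.grading i) ∧
    (∀ a : A, ρ (d a) = 0) ∧
    (∀ i : ℤ, ∀ b ∈ T.grading i, ∃ a ∈ 𝒜 i, d a = 0 ∧ ρ a = b) ∧
    (∀ a : A, d a = 0 → ρ a = 0 → ∃ b, a = d b)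

/-- The cohomology of `(A, d)` is finitely generated as a ℚ-algebra. -/
def CohomologyFG (d : A →ₗ[ℚ] A) : Prop :=
  ∃ s : Finset A, (∀ x ∈ s, d x = 0) ∧
    ∀ a : A, d a = 0 → ∃ b ∈ Algebra.adjoin ℚ (s : Set A), a - b ∈ LinearMap.range d

namespace St13

section Aux

lemma sgn_even {n : ℤ} (h : Even n) : ((-1:ℚ)) ^ n = 1 := h.neg_one_zpow

lemma sgn_sub_even {a b : ℤ} (h : Even (a - b)) : ((-1:ℚ)) ^ a = ((-1:ℚ)) ^ b := by
  obtain ⟨k, hk⟩ := h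
  have ha : a = b + (k + k) := by linarith
  rw [ha, zpow_add₀ (by norm_num : (-1:ℚ) ≠ 0), sgn_even ⟨k, rfl⟩, mul_comm, one_mul]

lemma sgn_succ (a : ℤ) : ((-1:ℚ)) ^ (a + 1) = -((-1:ℚ)) ^ a := by
  rw [zpow_add₀ (by norm_num : (-1:ℚ) ≠ 0)]; ring

variable {A : Type} [Ring A] [Algebra ℚ A]
variable {𝒜 V : ℤ → Submodule ℚ A} {d : A →ₗ[ℚ] A}

/-- distinct graded pieces intersect trivially -/
lemma mem_ne_zero (hS : SullivanData 𝒜 V d) {i j : ℤ} (hij : i ≠ j) {a : A}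
    (hi : a ∈ 𝒜 i) (hj : a ∈ 𝒜 j) : a = 0 := by
  have h := hS.internal.submodule_iSupIndep (i := i)
  have hj' : a ∈ ⨆ (k) (_ : k ≠ i), 𝒜 k :=
    Submodule.mem_iSup_of_mem j (Submodule.mem_iSup_of_mem (Ne.symm hij) hj)
  exact (Submodule.disjoint_def.mp h) a hi hj'

/-- an element of a negatively-indexed piece is zero -/
lemma neg_zero' (hS : SullivanData 𝒜 V d) {i : ℤ} (hi : i < 0) {a : A}
    (ha : a ∈ 𝒜 i) : a = 0 := by
  rw [hS.neg_bot i hi] at ha; simpa using ha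

/-- extensionality of linear maps on the graded pieces -/
lemma lmap_ext (hS : SullivanData 𝒜 V d) {f g : A →ₗ[ℚ] A}
    (h : ∀ i : ℤ, ∀ a ∈ 𝒜 i, f a = g a) : f = g := by
  ext x
  have hx : x ∈ ⨆ i : ℤ, 𝒜 i := by
    rw [hS.internal.submodule_iSup_eq_top]; trivial
  refine Submodule.iSup_induction (motive := fun z => f z = g z) _ hx h (by simp) ?_
  intro a b ha hb; rw [map_add, map_add, ha, hb]


lemma dcomm_apply (d η : A →ₗ[ℚ] A) (n : ℤ) (a : A) :
    Dcomm d η n a = d (η a) - ((-1:ℚ))^n • η (d a) := rfl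

lemma cyc_apply {n : ℤ} {β : A →ₗ[ℚ] A} (hc : Dcomm d β n = 0) (a : A) :
    d (β a) = ((-1:ℚ))^n • β (d a) := by
  have := congrFun (congrArg (fun (f : A →ₗ[ℚ] A) => f.toFun) hc) a
  simpa [Dcomm, sub_eq_zero] using this

lemma leibniz_one (hS : SullivanData 𝒜 V d) {n : ℤ} {F : A →ₗ[ℚ] A}
    (hF : IsDegDer 𝒜 n F) : F 1 = 0 := by
  have h := hF.leibniz 0 0 1 hS.one_mem 1 hS.one_mem
  rw [one_mul, zero_mul, zpow_zero, one_smul, mul_one, one_mul] at h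
  exact add_eq_right.mp h.symm

lemma isDegDer_smul {n : ℤ} {F : A →ₗ[ℚ] A} (c : ℚ) (hF : IsDegDer 𝒜 n F) :
    IsDegDer 𝒜 n (c • F) where
  maps_mem i a ha := by
    simpa using Submodule.smul_mem _ c (hF.maps_mem i a ha)
  leibniz i j a ha b hb := by
    simp only [LinearMap.smul_apply, hF.leibniz i j a ha b hb, smul_add,
      smul_mul_assoc, mul_smul_comm]
    rw [smul_comm c]

lemma isDegDer_bracket {t p : ℤ} (ht : Even t) {θ β : A →ₗ[ℚ] A}
    (hθ : IsDegDer 𝒜 t θ) (hβ : IsDegDer 𝒜 p β) :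
    IsDegDer 𝒜 (p + t) (θ ∘ₗ β - β ∘ₗ θ) where
  maps_mem i a ha := by
    have h1 : θ (β a) ∈ 𝒜 (i - p - t) := hθ.maps_mem _ _ (hβ.maps_mem _ _ ha)
    have h2 : β (θ a) ∈ 𝒜 (i - t - p) := hβ.maps_mem _ _ (hθ.maps_mem _ _ ha)
    have e1 : i - p - t = i - (p + t) := by ring
    have e2 : i - t - p = i - (p + t) := by ring
    rw [e1] at h1; rw [e2] at h2
    simpa using sub_mem h1 h2
  leibniz i j a ha b hb := by
    have hba : β a ∈ 𝒜 (i - p) := hβ.maps_mem _ _ ha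
    have hta : θ a ∈ 𝒜 (i - t) := hθ.maps_mem _ _ ha
    have s1 : ((-1:ℚ))^((i-p)*t) = 1 := sgn_even (ht.mul_left _)
    have s2 : ((-1:ℚ))^(i*t) = 1 := sgn_even (ht.mul_left _)
    have s3 : ((-1:ℚ))^((i-t)*p) = ((-1:ℚ))^(i*p) := by
      refine sgn_sub_even ?_
      have : (i-t)*p - i*p = -(t*p) := by ring
      rw [this]
      exact ((ht.mul_right _).neg)
    have s4 : ((-1:ℚ))^(i*(p+t)) = ((-1:ℚ))^(i*p) := by
      refine sgn_sub_even ?_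
      have : i*(p+t) - i*p = i*t := by ring
      rw [this]
      exact ht.mul_left _
    simp only [LinearMap.sub_apply, LinearMap.comp_apply]
    have E1 : θ (β (a*b)) = θ (β a) * b + β a * θ b
        + ((-1:ℚ))^(i*p) • (θ a * β b) + ((-1:ℚ))^(i*p) • (a * θ (β b)) := by
      rw [hβ.leibniz i j a ha b hb, map_add, map_smul,
          hθ.leibniz (i-p) j (β a) hba b hb,
          hθ.leibniz i (j-p) a ha (β b) (hβ.maps_mem _ _ hb), s1, s2, one_smul,
          one_smul, smul_add]
      abel
    have E2 : β (θ (a*b)) = β (θ a) * b + ((-1:ℚ))^(i*p) • (θ a * β b)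
        + β a * θ b + ((-1:ℚ))^(i*p) • (a * β (θ b)) := by
      rw [hθ.leibniz i j a ha b hb, s2, one_smul, map_add,
          hβ.leibniz (i-t) j (θ a) hta b hb, s3,
          hβ.leibniz i (j-t) a ha (θ b) (hθ.maps_mem _ _ hb)]
      abel
    rw [E1, E2, s4, sub_mul, mul_sub, smul_sub]
    abel


lemma dcomm_smul (c : ℚ) (X : A →ₗ[ℚ] A) (n : ℤ) :
    Dcomm d (c • X) n = c • Dcomm d X n := by
  ext a
  simp only [Dcomm, LinearMap.sub_apply, LinearMap.comp_apply, LinearMap.smul_apply,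
    map_smul, smul_sub]
  rw [smul_comm ((-1:ℚ)^n) c]

lemma dcomm_bracket {t p : ℤ} (hts : ((-1:ℚ))^t = 1) {θ β : A →ₗ[ℚ] A}
    (hθc : Dcomm d θ t = 0) (hβc : Dcomm d β p = 0) :
    Dcomm d (θ ∘ₗ β - β ∘ₗ θ) (p + t) = 0 := by
  ext a
  have h1 : ∀ x, d (θ x) = θ (d x) := fun x => by
    simpa [hts] using cyc_apply hθc x
  have h2 : ∀ x, d (β x) = ((-1:ℚ))^p • β (d x) := cyc_apply hβc
  have hpt : ((-1:ℚ))^(p+t) = ((-1:ℚ))^p := by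
    rw [zpow_add₀ (by norm_num : (-1:ℚ) ≠ 0), hts, mul_one]
  have c1 : d (θ (β a)) = ((-1:ℚ))^p • θ (β (d a)) := by rw [h1, h2, map_smul]
  have c2 : d (β (θ a)) = ((-1:ℚ))^p • β (θ (d a)) := by rw [h2, h1]
  simp only [Dcomm, LinearMap.sub_apply, LinearMap.comp_apply, LinearMap.smul_apply,
    LinearMap.zero_apply, map_sub]
  rw [c1, c2, hpt, smul_sub]
  abel

/-- The divided iterated bracket `ad_θ^n(α)/n!`. -/
noncomputable def Aop (θ α : A →ₗ[ℚ] A) : ℕ → A →ₗ[ℚ] A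
  | 0 => α
  | (n+1) => ((n:ℚ)+1)⁻¹ • (θ ∘ₗ Aop θ α n - Aop θ α n ∘ₗ θ)

lemma Aop_bracket (θ α : A →ₗ[ℚ] A) (n : ℕ) :
    θ ∘ₗ Aop θ α n - Aop θ α n ∘ₗ θ = ((n:ℚ)+1) • Aop θ α (n+1) := by
  rw [show Aop θ α (n+1) = ((n:ℚ)+1)⁻¹ • (θ ∘ₗ Aop θ α n - Aop θ α n ∘ₗ θ) from rfl,
    smul_smul, mul_inv_cancel₀ (Nat.cast_add_one_ne_zero n), one_smul]

lemma Aop_bracket_apply (θ α : A →ₗ[ℚ] A) (n : ℕ) (a : A) :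
    θ (Aop θ α n a) = Aop θ α n (θ a) + ((n:ℚ)+1) • Aop θ α (n+1) a := by
  have h := LinearMap.congr_fun (Aop_bracket θ α n) a
  simp only [LinearMap.sub_apply, LinearMap.comp_apply, LinearMap.smul_apply] at h
  exact sub_eq_iff_eq_add'.mp h

section Main

variable (m : ℕ) (q : ℤ) {θ α : A →ₗ[ℚ] A}

lemma Aop_isDegDer (hθd : IsDegDer 𝒜 (2*(m:ℤ)) θ) (hαd : IsDegDer 𝒜 q α) (n : ℕ) :
    IsDegDer 𝒜 (q + 2*(m:ℤ)*(n:ℤ)) (Aop θ α n) := by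
  induction n with
  | zero => simpa [Aop] using hαd
  | succ n ih =>
    have he : q + 2*(m:ℤ)*((n+1 : ℕ):ℤ) = (q + 2*(m:ℤ)*(n:ℤ)) + 2*(m:ℤ) := by
      push_cast; ring
    rw [he, show Aop θ α (n+1) = ((n:ℚ)+1)⁻¹ • (θ ∘ₗ Aop θ α n - Aop θ α n ∘ₗ θ) from rfl]
    exact isDegDer_smul _ (isDegDer_bracket ⟨(m:ℤ), by ring⟩ hθd ih)

lemma Aop_cycle (hθc : Dcomm d θ (2*(m:ℤ)) = 0) (hαc : Dcomm d α q = 0) (n : ℕ) :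
    Dcomm d (Aop θ α n) (q + 2*(m:ℤ)*(n:ℤ)) = 0 := by
  induction n with
  | zero => simpa [Aop] using hαc
  | succ n ih =>
    have he : q + 2*(m:ℤ)*((n+1 : ℕ):ℤ) = (q + 2*(m:ℤ)*(n:ℤ)) + 2*(m:ℤ) := by
      push_cast; ring
    rw [he, show Aop θ α (n+1) = ((n:ℚ)+1)⁻¹ • (θ ∘ₗ Aop θ α n - Aop θ α n ∘ₗ θ) from rfl,
      dcomm_smul]
    rw [dcomm_bracket (sgn_even ⟨(m:ℤ), by ring⟩) hθc ih, smul_zero]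

lemma Aop_vanish (hS : SullivanData 𝒜 V d) (hθd : IsDegDer 𝒜 (2*(m:ℤ)) θ) (hαd : IsDegDer 𝒜 q α)
    {i : ℤ} {a : A} (ha : a ∈ 𝒜 i) {n : ℕ} (hn : i < q + 2*(m:ℤ)*(n:ℤ)) :
    Aop θ α n a = 0 :=
  neg_zero' hS (i := i - (q + 2*(m:ℤ)*(n:ℤ))) (by linarith)
    ((Aop_isDegDer m q hθd hαd n).maps_mem i a ha)

end Main

/-- degreewise-finite sums of linear maps -/
noncomputable def locSum (hS : SullivanData 𝒜 V d) (G : ℕ → A →ₗ[ℚ] A) (B : ℤ → ℕ) :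
    A →ₗ[ℚ] A :=
  (DirectSum.toModule ℚ ℤ A fun i => (∑ k ∈ Finset.range (B i), G k) ∘ₗ (𝒜 i).subtype) ∘ₗ
    (LinearEquiv.ofBijective (DirectSum.coeLinearMap fun i => 𝒜 i)
      hS.internal).symm.toLinearMap

lemma locSum_apply (hS : SullivanData 𝒜 V d) (G : ℕ → A →ₗ[ℚ] A) (B : ℤ → ℕ)
    {i : ℤ} {a : A} (ha : a ∈ 𝒜 i) :
    locSum hS G B a = ∑ k ∈ Finset.range (B i), G k a := by
  set e := LinearEquiv.ofBijective (DirectSum.coeLinearMap fun i => 𝒜 i) hS.internal with he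
  have h1 : e.symm a = DirectSum.lof ℚ ℤ (fun i => 𝒜 i) i ⟨a, ha⟩ := by
    apply e.injective
    rw [e.apply_symm_apply]
    symm
    show DirectSum.coeLinearMap (fun i => 𝒜 i) _ = a
    rw [DirectSum.lof_eq_of, DirectSum.coeLinearMap_of]
  show (DirectSum.toModule ℚ ℤ A fun i => (∑ k ∈ Finset.range (B i), G k) ∘ₗ (𝒜 i).subtype)
      (e.symm a) = _
  rw [h1, DirectSum.toModule_lof]
  simp [LinearMap.sum_apply]

lemma locSum_apply_ge (hS : SullivanData 𝒜 V d) (G : ℕ → A →ₗ[ℚ] A) (B : ℤ → ℕ)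
    {i : ℤ} {a : A} (ha : a ∈ 𝒜 i) {N : ℕ} (hN : B i ≤ N)
    (hvan : ∀ k, B i ≤ k → G k a = 0) :
    locSum hS G B a = ∑ k ∈ Finset.range N, G k a := by
  rw [locSum_apply hS G B ha]
  exact Finset.sum_subset (Finset.range_subset_range.mpr hN)
    (fun k hk hk2 => hvan k (by simpa using hk2))


section Ypow

variable {m : ℕ} {y : A}

lemma ypow_mem (hS : SullivanData 𝒜 V d) (hy : y ∈ 𝒜 (2*(m:ℤ))) (k : ℕ) :
    y^k ∈ 𝒜 (2*(m:ℤ)*(k:ℤ)) := by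
  induction k with
  | zero => simpa using hS.one_mem
  | succ k ih =>
    have he : 2*(m:ℤ)*((k+1:ℕ):ℤ) = 2*(m:ℤ)*(k:ℤ) + 2*(m:ℤ) := by push_cast; ring
    rw [he, pow_succ]
    exact hS.mul_mem _ _ _ ih _ hy

lemma ypow_comm (hS : SullivanData 𝒜 V d) (hy : y ∈ 𝒜 (2*(m:ℤ))) (k : ℕ) {i : ℤ}
    {b : A} (hb : b ∈ 𝒜 i) : y^k * b = b * y^k := by
  have h := hS.gcomm _ _ (y^k) (ypow_mem hS hy k) b hb
  rw [h, sgn_even ⟨(m:ℤ)*(k:ℤ)*i, by ring⟩, one_smul]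

lemma d_ypow_mul (hS : SullivanData 𝒜 V d) (hy : y ∈ 𝒜 (2*(m:ℤ))) (hdy : d y = 0)
    (k : ℕ) {i : ℤ} {b : A} (hb : b ∈ 𝒜 i) : d (y^k * b) = y^k * d b := by
  induction k with
  | zero => simp
  | succ k ih =>
    have hyb : y^k * b ∈ 𝒜 (2*(m:ℤ)*(k:ℤ) + i) :=
      hS.mul_mem _ _ _ (ypow_mem hS hy k) _ hb
    rw [pow_succ', mul_assoc,
      hS.d_der.leibniz _ _ y hy _ hyb, hdy, zero_mul,
      sgn_even ⟨-(m:ℤ), by ring⟩, one_smul, zero_add, ih, mul_assoc]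

lemma θ_ypow_mul (hS : SullivanData 𝒜 V d) {θ : A →ₗ[ℚ] A}
    (hθd : IsDegDer 𝒜 (2*(m:ℤ)) θ)
    (hy : y ∈ 𝒜 (2*(m:ℤ))) (hθy : θ y = 1) (k : ℕ) {i : ℤ} {b : A} (hb : b ∈ 𝒜 i) :
    θ (y^k * b) = (k:ℚ) • (y^(k-1) * b) + y^k * θ b := by
  induction k with
  | zero => simp
  | succ k ih =>
    have hyb : y^k * b ∈ 𝒜 (2*(m:ℤ)*(k:ℤ) + i) :=
      hS.mul_mem _ _ _ (ypow_mem hS hy k) _ hb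
    have step : θ (y^(k+1) * b)
        = y^k * b + ((k:ℚ) • (y^(k-1+1) * b) + y^(k+1) * θ b) := by
      rw [pow_succ', mul_assoc, hθd.leibniz _ _ y hy _ hyb, hθy, one_mul,
        sgn_even ⟨2*(m:ℤ)*(m:ℤ), by ring⟩, one_smul, ih, mul_add, mul_smul_comm]
      simp only [← mul_assoc, ← pow_succ']
    rw [step]
    cases k with
    | zero => simp
    | succ n =>
      rw [show (n+1-1+1) = n+1 from rfl, show (n+1+1) - 1 = n+1 from rfl,
        show ((n+1+1:ℕ):ℚ) = ((n+1:ℕ):ℚ) + 1 by push_cast; ring, add_smul, one_smul]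
      abel

end Ypow

lemma Ly_pow_apply (y : A) (k : ℕ) (a : A) :
    ((LinearMap.mulLeft ℚ y)^k) a = y^k * a := by
  induction k generalizing a with
  | zero => simp
  | succ k ih =>
    rw [pow_succ, pow_succ, Module.End.mul_apply, LinearMap.mulLeft_apply, ih, ← mul_assoc]


lemma isDegDer_zero : IsDegDer 𝒜 n (0 : A →ₗ[ℚ] A) where
  maps_mem i a _ := Submodule.zero_mem _
  leibniz i j a _ b _ := by simp

lemma dcomm_zero (d : A →ₗ[ℚ] A) (n : ℤ) : Dcomm d (0 : A →ₗ[ℚ] A) n = 0 := by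
  ext a; simp [Dcomm]

end Aux
end St13

open St13 in
theorem statement13' (A : Type) [Ring A] [Algebra ℚ A]
    (𝒜 V : ℤ → Submodule ℚ A) (d : A →ₗ[ℚ] A)
    (hS : SullivanData 𝒜 V d)
    (m : ℕ) (y : A) (hy : y ∈ V (2 * (m : ℤ))) (hdy : d y = 0)
    (θ : A →ₗ[ℚ] A) (hθ : IsDerCycle 𝒜 d (2 * (m : ℤ)) θ) (hθy : θ y = 1)
    (hnzd : ∀ p : ℤ, 1 ≤ p → ∀ β : A →ₗ[ℚ] A, IsDerCycle 𝒜 d p β →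
      (∃ η : A →ₗ[ℚ] A, IsDegDer 𝒜 (p + 2 * (m : ℤ) + 1) η ∧
        gBracket θ β (2 * (m : ℤ)) p = Dcomm d η (p + 2 * (m : ℤ) + 1)) →
      ∃ (c : ℚ) (η' : A →ₗ[ℚ] A), IsDegDer 𝒜 (p + 1) η' ∧
        β = c • θ + Dcomm d η' (p + 1)) :
    ∀ q : ℤ, 2 * (m : ℤ) ≤ q → ∀ α : A →ₗ[ℚ] A, IsDerCycle 𝒜 d q α →
      ∃ (c : ℚ) (η : A →ₗ[ℚ] A), IsDegDer 𝒜 (q + 1) η ∧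
        α = c • θ + Dcomm d η (q + 1) := by
  intro q hq α hα
  classical
  by_cases htriv : (1:A) = 0
  · refine ⟨0, 0, isDegDer_zero, ?_⟩
    apply LinearMap.ext; intro a
    have ha0 : a = 0 := by
      calc a = a * 1 := (mul_one a).symm
      _ = 0 := by rw [htriv, mul_zero]
    simp [ha0]
  have hm : 1 ≤ m := by
    by_contra hmc
    have hm0 : m = 0 := by omega
    subst hm0
    have h0 : y ∈ V 0 := by simpa using hy
    rw [hS.V_zero] at h0
    have hy0 : y = 0 := by simpa using h0
    rw [hy0, map_zero] at hθy
    exact htriv hθy.symm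
  obtain ⟨hθd, hθc⟩ := hθ
  obtain ⟨hαd, hαc⟩ := hα
  have hy' : y ∈ 𝒜 (2*(m:ℤ)) := hS.V_le _ hy
  have hm' : (1:ℤ) ≤ (m:ℤ) := by exact_mod_cast hm
  have hq1 : (1:ℤ) ≤ q := by linarith
  -- the degreewise bound function
  set B : ℤ → ℕ := fun i => (i - q).toNat + 1 with hB
  have hB1 : ∀ i, 1 ≤ B i := fun i => Nat.le_add_left 1 _
  have hBmono : ∀ {i i' : ℤ}, i ≤ i' → B i ≤ B i' := by
    intro i i' h
    simp only [hB]
    have := Int.toNat_le_toNat (show i - q ≤ i' - q by linarith)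
    omega
  have hkgt : ∀ {i : ℤ} {k : ℕ}, B i ≤ k → i - q < (k:ℤ) := by
    intro i k hk
    have h1 : (i - q) ≤ ((i - q).toNat : ℤ) := Int.self_le_toNat _
    have h2 : ((i-q).toNat : ℤ) + 1 ≤ (k:ℤ) := by
      have : (i - q).toNat + 1 ≤ k := hk
      exact_mod_cast this
    linarith
  -- vanishing of Aop in low degrees
  have hvanA : ∀ {i : ℤ} {a : A}, a ∈ 𝒜 i → ∀ n : ℕ, B i ≤ n → Aop θ α n a = 0 := by
    intro i a ha n hn
    have h1 : i - q < (n:ℤ) := hkgt hn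
    have h2 : (n:ℤ) ≤ 2*(m:ℤ)*(n:ℤ) := by nlinarith [Int.ofNat_nonneg n]
    exact Aop_vanish m q hS hθd hαd ha (by linarith)
  -- the operators S j  (the weight-j components of α, written via divided brackets)
  set co : ℕ → ℕ → ℚ := fun j k => ((-1:ℚ))^k * ((j+k).choose k : ℚ) with hco
  set G : ℕ → ℕ → A →ₗ[ℚ] A := fun j k =>
      co j k • (((LinearMap.mulLeft ℚ y)^k) ∘ₗ Aop θ α (j+k)) with hGdef
  set S : ℕ → A →ₗ[ℚ] A := fun j => locSum hS (G j) B with hSdef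
  have hGapp : ∀ (j k : ℕ) (a : A), G j k a = co j k • (y^k * Aop θ α (j+k) a) := by
    intro j k a
    simp only [hGdef, LinearMap.smul_apply, LinearMap.comp_apply, Ly_pow_apply]
  have hGvan : ∀ (j : ℕ) {i : ℤ} {a : A}, a ∈ 𝒜 i → ∀ k, B i ≤ k → G j k a = 0 := by
    intro j i a ha k hk
    rw [hGapp, hvanA ha (j+k) (le_trans hk (Nat.le_add_left k j)), mul_zero, smul_zero]
  have hSapp : ∀ (j : ℕ) {i : ℤ} {a : A}, a ∈ 𝒜 i → ∀ N, B i ≤ N →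
      S j a = ∑ k ∈ Finset.range N, co j k • (y^k * Aop θ α (j+k) a) := by
    intro j i a ha N hN
    rw [hSdef]
    rw [locSum_apply_ge hS (G j) B ha hN (fun k hk => hGvan j ha k hk)]
    exact Finset.sum_congr rfl fun k _ => hGapp j k a
  have hSmem : ∀ (j : ℕ) {i : ℤ} {a : A}, a ∈ 𝒜 i →
      S j a ∈ 𝒜 (i - (q + 2*(m:ℤ)*(j:ℤ))) := by
    intro j i a ha
    rw [hSapp j ha (B i) le_rfl]
    apply Submodule.sum_mem
    intro k _
    apply Submodule.smul_mem
    have h1 : Aop θ α (j+k) a ∈ 𝒜 (i - (q + 2*(m:ℤ)*((j+k:ℕ):ℤ))) :=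
      (Aop_isDegDer m q hθd hαd (j+k)).maps_mem i a ha
    have h2 := hS.mul_mem _ _ _ (ypow_mem hS hy' k) _ h1
    convert h2 using 2
    push_cast; ring
  have hSder : ∀ j : ℕ, IsDegDer 𝒜 (q + 2*(m:ℤ)*(j:ℤ)) (S j) := by
    intro j
    constructor
    · intro i a ha; exact hSmem j ha
    · intro i i2 a ha b hb
      have hab : a*b ∈ 𝒜 (i+i2) := hS.mul_mem _ _ _ ha _ hb
      set N := max (B (i+i2)) (max (B i) (B i2)) with hN
      rw [hSapp j hab N (le_max_left _ _),
          hSapp j ha N (le_trans (le_max_left _ _) (le_max_right _ _)),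
          hSapp j hb N (le_trans (le_max_right _ _) (le_max_right _ _)),
          Finset.sum_mul, Finset.mul_sum, Finset.smul_sum, ← Finset.sum_add_distrib]
      refine Finset.sum_congr rfl ?_
      intro k _
      have hAab := (Aop_isDegDer m q hθd hαd (j+k)).leibniz i i2 a ha b hb
      have hsgn : ((-1:ℚ))^(i*(q + 2*(m:ℤ)*((j+k:ℕ):ℤ))) =
          ((-1:ℚ))^(i*(q + 2*(m:ℤ)*(j:ℤ))) := by
        apply sgn_sub_even
        refine ⟨i*(m:ℤ)*(k:ℤ), by push_cast; ring⟩
      rw [hAab, hsgn]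
      simp only [mul_add, mul_smul_comm, smul_add, smul_smul, smul_mul_assoc, ← mul_assoc]
      rw [ypow_comm hS hy' k ha]
      congr 1
      rw [mul_comm]
  -- S j is a cycle
  have hScyc : ∀ j : ℕ, Dcomm d (S j) (q + 2*(m:ℤ)*(j:ℤ)) = 0 := by
    intro j
    refine lmap_ext hS (g := 0) ?_
    intro i a ha
    rw [dcomm_apply, LinearMap.zero_apply]
    have hda : d a ∈ 𝒜 (i+1) := by
      have h := hS.d_der.maps_mem i a ha
      rwa [show i - (-1) = i + 1 by ring] at h
    rw [hSapp j ha (max (B i) (B (i+1))) (le_max_left _ _),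
      hSapp j hda (max (B i) (B (i+1))) (le_max_right _ _), map_sum,
      Finset.smul_sum, ← Finset.sum_sub_distrib]
    apply Finset.sum_eq_zero
    intro k _
    have hmem : Aop θ α (j+k) a ∈ 𝒜 (i - (q + 2*(m:ℤ)*((j+k:ℕ):ℤ))) :=
      (Aop_isDegDer m q hθd hαd (j+k)).maps_mem i a ha
    rw [map_smul, d_ypow_mul hS hy' hdy k hmem,
        cyc_apply (Aop_cycle m q hθc hαc (j+k)) a]
    have hsg : ((-1:ℚ))^(q + 2*(m:ℤ)*((j+k:ℕ):ℤ)) = ((-1:ℚ))^(q + 2*(m:ℤ)*(j:ℤ)) := by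
      apply sgn_sub_even; exact ⟨(m:ℤ)*(k:ℤ), by push_cast; ring⟩
    rw [hsg, mul_smul_comm, smul_smul, smul_smul, mul_comm (co j k) _, sub_self]
  -- the coefficient recurrence
  have hcoeff : ∀ (j k : ℕ),
      co j (k+1) * ((k:ℚ)+1) = -(co j k * (((j+k:ℕ):ℚ)+1)) := by
    intro j k
    have h := Nat.add_one_mul_choose_eq (j+k) k
    have hq2 : (((j+k:ℕ):ℚ)+1) * ((j+k).choose k : ℚ)
        = ((j+k+1).choose (k+1) : ℚ) * ((k:ℚ)+1) := by exact_mod_cast h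
    simp only [hco]
    show ((-1:ℚ))^(k+1) * (((j+k+1).choose (k+1) : ℕ) : ℚ) * ((k:ℚ)+1)
        = -(((-1:ℚ))^k * (((j+k).choose k : ℕ) : ℚ) * (((j+k:ℕ):ℚ)+1))
    push_cast
    push_cast at hq2
    rw [pow_succ]
    linear_combination ((-1:ℚ))^k * hq2
  -- θ commutes with S j
  have hSbr : ∀ j : ℕ, θ ∘ₗ S j - S j ∘ₗ θ = 0 := by
    intro j
    refine lmap_ext hS (g := 0) ?_
    intro i a ha
    simp only [LinearMap.sub_apply, LinearMap.comp_apply, LinearMap.zero_apply]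
    rw [sub_eq_zero]
    have hθa : θ a ∈ 𝒜 (i - 2*(m:ℤ)) := hθd.maps_mem i a ha
    have hBθ : B (i - 2*(m:ℤ)) ≤ B i := hBmono (by linarith)
    rw [hSapp j ha (B i + 1) (Nat.le_succ _),
      hSapp j hθa (B i + 1) (le_trans hBθ (Nat.le_succ _)), map_sum]
    have hterm : ∀ k, θ (co j k • (y^k * Aop θ α (j+k) a))
        = co j k • (y^k * Aop θ α (j+k) (θ a))
          + ((co j k * (k:ℚ)) • (y^(k-1) * Aop θ α (j+k) a)
             + (co j k * (((j+k:ℕ):ℚ)+1)) • (y^k * Aop θ α (j+k+1) a)) := by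
      intro k
      have hmem : Aop θ α (j+k) a ∈ 𝒜 (i - (q + 2*(m:ℤ)*((j+k:ℕ):ℤ))) :=
        (Aop_isDegDer m q hθd hαd (j+k)).maps_mem i a ha
      rw [map_smul, θ_ypow_mul hS hθd hy' hθy k hmem, Aop_bracket_apply]
      simp only [mul_add, mul_smul_comm, smul_add, smul_smul]
      abel
    rw [Finset.sum_congr rfl (fun k _ => hterm k), Finset.sum_add_distrib]
    have hzero : ∑ k ∈ Finset.range (B i + 1),
        ((co j k * (k:ℚ)) • (y^(k-1) * Aop θ α (j+k) a)
          + (co j k * (((j+k:ℕ):ℚ)+1)) • (y^k * Aop θ α (j+k+1) a)) = 0 := by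
      rw [Finset.sum_add_distrib,
        Finset.sum_range_succ' (fun k => (co j k * (k:ℚ)) • (y^(k-1) * Aop θ α (j+k) a)) (B i),
        Finset.sum_range_succ (fun k => (co j k * (((j+k:ℕ):ℚ)+1)) • (y^k * Aop θ α (j+k+1) a)) (B i)]
      have hvan1 : Aop θ α (j+(B i)+1) a = 0 := hvanA ha (j+(B i)+1) (by omega)
      rw [hvan1]
      simp only [Nat.cast_zero, mul_zero, zero_smul, add_zero, smul_zero]
      rw [← Finset.sum_add_distrib]
      apply Finset.sum_eq_zero
      intro k _
      have hc : co j (k+1) * ((k+1:ℕ):ℚ) = -(co j k * (((j+k:ℕ):ℚ)+1)) := by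
        push_cast
        push_cast at hcoeff
        exact hcoeff j k
      rw [show (k+1) - 1 = k from rfl, show j + (k+1) = (j+k)+1 from rfl, hc,
        neg_smul, neg_add_cancel]
    rw [hzero, add_zero]
  -- apply the non-zero-divisor hypothesis to each S j
  have hp1 : ∀ j : ℕ, (1:ℤ) ≤ q + 2*(m:ℤ)*(j:ℤ) := by
    intro j
    have h0 : (0:ℤ) ≤ 2*(m:ℤ)*(j:ℤ) := by positivity
    linarith
  have hnz : ∀ j : ℕ, ∃ (c : ℚ) (η' : A →ₗ[ℚ] A),
      IsDegDer 𝒜 (q + 2*(m:ℤ)*(j:ℤ) + 1) η' ∧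
      S j = c • θ + Dcomm d η' (q + 2*(m:ℤ)*(j:ℤ) + 1) := by
    intro j
    refine hnzd _ (hp1 j) (S j) ⟨hSder j, hScyc j⟩ ⟨0, isDegDer_zero, ?_⟩
    rw [dcomm_zero]
    show θ ∘ₗ S j - ((-1:ℚ))^((2*(m:ℤ))*(q + 2*(m:ℤ)*(j:ℤ))) • (S j ∘ₗ θ) = 0
    rw [sgn_even ⟨(m:ℤ)*(q + 2*(m:ℤ)*(j:ℤ)), by ring⟩, one_smul]
    exact hSbr j
  choose cc ηη hηd hηe using hnz
  -- the coefficients vanish in positive weight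
  have hcc0 : ∀ j : ℕ, 1 ≤ j → cc j = 0 := by
    intro j hj
    by_contra hc
    have heq : cc j • θ = S j - Dcomm d (ηη j) (q + 2*(m:ℤ)*(j:ℤ) + 1) := by
      rw [hηe j]; abel
    have happly := LinearMap.congr_fun heq y
    simp only [LinearMap.smul_apply, LinearMap.sub_apply, hθy] at happly
    have hmem2 : S j y - Dcomm d (ηη j) (q + 2*(m:ℤ)*(j:ℤ) + 1) y
        ∈ 𝒜 (2*(m:ℤ) - (q + 2*(m:ℤ)*(j:ℤ))) := by
      apply sub_mem
      · exact hSmem j hy'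
      · rw [dcomm_apply]
        apply sub_mem
        · have h1 := (hηd j).maps_mem _ y hy'
          have h2 := hS.d_der.maps_mem _ _ h1
          have he : 2*(m:ℤ) - (q + 2*(m:ℤ)*(j:ℤ) + 1) - (-1)
              = 2*(m:ℤ) - (q + 2*(m:ℤ)*(j:ℤ)) := by ring
          rwa [he] at h2
        · rw [hdy, map_zero, smul_zero]; exact Submodule.zero_mem _
    rw [← happly] at hmem2
    have h0mem : cc j • (1:A) ∈ 𝒜 0 := Submodule.smul_mem _ _ hS.one_mem
    have hne : (0:ℤ) ≠ 2*(m:ℤ) - (q + 2*(m:ℤ)*(j:ℤ)) := by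
      have hj' : (1:ℤ) ≤ (j:ℤ) := by exact_mod_cast hj
      have h2m : 2*(m:ℤ) ≤ 2*(m:ℤ)*(j:ℤ) :=
        le_mul_of_one_le_right (by linarith) hj'
      intro h
      linarith
    have hz := mem_ne_zero hS hne h0mem hmem2
    rcases smul_eq_zero.mp hz with h|h
    · exact hc h
    · exact htriv h
  -- assemble the homotopy η
  set H : ℕ → A →ₗ[ℚ] A := fun j => ((LinearMap.mulLeft ℚ y)^j) ∘ₗ ηη j with hHdef
  have hHvan : ∀ {i : ℤ} {a : A}, a ∈ 𝒜 i → ∀ j, B i ≤ j → H j a = 0 := by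
    intro i a ha j hj
    have h1 := (hηd j).maps_mem i a ha
    have h2 : ηη j a = 0 := by
      apply neg_zero' hS (i := i - (q + 2*(m:ℤ)*(j:ℤ) + 1)) ?_ h1
      have h3 : i - q < (j:ℤ) := hkgt hj
      have h4 : (j:ℤ) ≤ 2*(m:ℤ)*(j:ℤ) := by nlinarith [Int.ofNat_nonneg j]
      linarith
    simp only [hHdef, LinearMap.comp_apply, h2, map_zero]
  set η : A →ₗ[ℚ] A := locSum hS H B with hηdef2
  have hηapp : ∀ {i : ℤ} {a : A}, a ∈ 𝒜 i → ∀ N, B i ≤ N →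
      η a = ∑ j ∈ Finset.range N, y^j * ηη j a := by
    intro i a ha N hN
    rw [hηdef2, locSum_apply_ge hS H B ha hN (fun j hj => hHvan ha j hj)]
    exact Finset.sum_congr rfl fun j _ => by simp [hHdef, Ly_pow_apply]
  have hηDer : IsDegDer 𝒜 (q+1) η := by
    constructor
    · intro i a ha
      rw [hηapp ha (B i) le_rfl]
      apply Submodule.sum_mem
      intro j _
      have h1 := (hηd j).maps_mem i a ha
      have h2 := hS.mul_mem _ _ _ (ypow_mem hS hy' j) _ h1
      convert h2 using 2
      push_cast; ring
    · intro i i2 a ha b hb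
      have hab : a*b ∈ 𝒜 (i+i2) := hS.mul_mem _ _ _ ha _ hb
      rw [hηapp hab (max (B (i+i2)) (max (B i) (B i2))) (le_max_left _ _),
          hηapp ha _ (le_trans (le_max_left _ _) (le_max_right _ _)),
          hηapp hb _ (le_trans (le_max_right _ _) (le_max_right _ _)),
          Finset.sum_mul, Finset.mul_sum, Finset.smul_sum, ← Finset.sum_add_distrib]
      refine Finset.sum_congr rfl ?_
      intro j _
      have hl := (hηd j).leibniz i i2 a ha b hb
      have hsgn2 : ((-1:ℚ))^(i*(q + 2*(m:ℤ)*(j:ℤ) + 1)) = ((-1:ℚ))^(i*(q+1)) := by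
        apply sgn_sub_even; exact ⟨i*(m:ℤ)*(j:ℤ), by push_cast; ring⟩
      rw [hl, hsgn2, mul_add, mul_smul_comm]
      simp only [← mul_assoc]
      rw [ypow_comm hS hy' j ha]
  -- conclude
  refine ⟨cc 0, η, hηDer, ?_⟩
  refine lmap_ext hS ?_
  intro i a ha
  have hda : d a ∈ 𝒜 (i+1) := by
    have h := hS.d_der.maps_mem i a ha
    rwa [show i - (-1) = i + 1 by ring] at h
  have hNi : B i ≤ max (B i) (B (i+1)) := le_max_left _ _
  have hNi1 : B (i+1) ≤ max (B i) (B (i+1)) := le_max_right _ _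
  set N := max (B i) (B (i+1)) with hNdef
  have hN1 : 1 ≤ N := le_trans (hB1 i) hNi
  rw [LinearMap.add_apply, LinearMap.smul_apply, dcomm_apply,
    hηapp ha N hNi, hηapp hda N hNi1, map_sum, Finset.smul_sum]
  have hstep1 : ∀ j ∈ Finset.range N, d (y^j * ηη j a) = y^j * d (ηη j a) :=
    fun j _ => d_ypow_mul hS hy' hdy j ((hηd j).maps_mem i a ha)
  rw [Finset.sum_congr rfl hstep1, ← Finset.sum_sub_distrib]
  have hterm2 : ∀ j ∈ Finset.range N,
      y^j * d (ηη j a) - ((-1:ℚ))^(q+1) • (y^j * ηη j (d a))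
        = y^j * S j a - y^j * (cc j • θ a) := by
    intro j _
    have hsg3 : ((-1:ℚ))^(q + 2*(m:ℤ)*(j:ℤ) + 1) = ((-1:ℚ))^(q+1) := by
      apply sgn_sub_even; exact ⟨(m:ℤ)*(j:ℤ), by push_cast; ring⟩
    have hD := LinearMap.congr_fun (hηe j) a
    simp only [LinearMap.add_apply, LinearMap.smul_apply, dcomm_apply] at hD
    rw [hsg3] at hD
    have hD' : d (ηη j a) - ((-1:ℚ))^(q+1) • ηη j (d a) = S j a - cc j • θ a := by
      rw [hD]; abel
    rw [← mul_smul_comm, ← mul_sub, hD', mul_sub]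
  rw [Finset.sum_congr rfl hterm2, Finset.sum_sub_distrib]
  have hsum2 : ∑ j ∈ Finset.range N, y^j * (cc j • θ a) = cc 0 • θ a := by
    rw [Finset.sum_eq_single 0]
    · rw [pow_zero, one_mul]
    · intro j _ hj
      rw [hcc0 j (Nat.one_le_iff_ne_zero.mpr hj), zero_smul, mul_zero]
    · intro h0
      exact absurd (Finset.mem_range.mpr (by omega)) h0
  have hmaster : ∑ j ∈ Finset.range N, y^j * S j a = α a := by
    have hexp : ∀ j ∈ Finset.range N, y^j * S j a
        = ∑ k ∈ Finset.range N, co j k • (y^(j+k) * Aop θ α (j+k) a) := by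
      intro j _
      rw [hSapp j ha N hNi, Finset.mul_sum]
      refine Finset.sum_congr rfl ?_
      intro k _
      rw [mul_smul_comm, ← mul_assoc, ← pow_add]
    rw [Finset.sum_congr rfl hexp, ← Finset.sum_product']
    have hfil := Finset.sum_filter_of_ne
      (s := Finset.range N ×ˢ Finset.range N)
      (f := fun p : ℕ×ℕ => co p.1 p.2 • (y^(p.1+p.2) * Aop θ α (p.1+p.2) a))
      (p := fun p : ℕ×ℕ => p.1 + p.2 < B i) ?hvan2
    case hvan2 =>
      intro p hp hne
      by_contra hlt
      push_neg at hlt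
      refine hne ?_
      show co p.1 p.2 • (y ^ (p.1 + p.2) * (Aop θ α (p.1 + p.2)) a) = 0
      rw [hvanA ha _ hlt, mul_zero, smul_zero]
    rw [← hfil]
    have hset : (Finset.range N ×ˢ Finset.range N).filter
          (fun p : ℕ×ℕ => p.1 + p.2 < B i)
        = (Finset.range (B i)).biUnion (fun n => Finset.HasAntidiagonal.antidiagonal n) := by
      ext p
      simp only [Finset.mem_filter, Finset.mem_product, Finset.mem_range,
        Finset.mem_biUnion, Finset.HasAntidiagonal.mem_antidiagonal]
      constructor
      · rintro ⟨⟨h1, h2⟩, h3⟩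
        exact ⟨p.1+p.2, h3, rfl⟩
      · rintro ⟨n, hn, rfl⟩
        have hBiN : B i ≤ N := hNi
        omega
    rw [hset, Finset.sum_biUnion ?hdisj]
    case hdisj =>
      intro x hx y2 hy2 hxy
      refine Finset.disjoint_left.mpr ?_
      intro pp hpx hpy
      rw [Finset.HasAntidiagonal.mem_antidiagonal] at hpx hpy
      exact hxy (by rw [← hpx, ← hpy])
    have hinner : ∀ n ∈ Finset.range (B i),
        (∑ p ∈ Finset.HasAntidiagonal.antidiagonal n,
          co p.1 p.2 • (y^(p.1+p.2) * Aop θ α (p.1+p.2) a))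
        = (if n = 0 then (1:ℚ) else 0) • (y^n * Aop θ α n a) := by
      intro n _
      rw [Finset.Nat.sum_antidiagonal_eq_sum_range_succ_mk]
      dsimp only
      have hterm3 : ∀ k ∈ Finset.range (n+1),
          co k (n-k) • (y^(k+(n-k)) * Aop θ α (k+(n-k)) a)
          = (((-1:ℚ))^(n-k) * (n.choose (n-k) : ℚ)) • (y^n * Aop θ α n a) := by
        intro k hk
        have hkn : k ≤ n := Nat.lt_succ_iff.mp (Finset.mem_range.mp hk)
        simp only [hco]
        rw [Nat.add_sub_cancel' hkn]
      rw [Finset.sum_congr rfl hterm3, ← Finset.sum_smul]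
      congr 1
      have hrefl := Finset.sum_range_reflect
        (fun t => ((-1:ℚ))^t * (n.choose t : ℚ)) (n+1)
      simp only [Nat.add_sub_cancel] at hrefl
      rw [hrefl]
      have halt := Int.alternating_sum_range_choose (n := n)
      have hq3 : ∑ k ∈ Finset.range (n+1), ((-1:ℚ))^k * (n.choose k : ℚ)
          = ((if n = 0 then 1 else 0 : ℤ) : ℚ) := by
        exact_mod_cast congrArg (fun z : ℤ => (z:ℚ)) halt
      rw [hq3]
      split <;> norm_num
    rw [Finset.sum_congr rfl hinner,
      Finset.sum_congr rfl
        (fun n _ => by rw [ite_smul, one_smul, zero_smul] :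
          ∀ n ∈ Finset.range (B i), (if n = 0 then (1:ℚ) else 0) • (y^n * Aop θ α n a)
            = if n = 0 then y^n * Aop θ α n a else 0),
      Finset.sum_ite_eq' (Finset.range (B i)) 0 (fun n => y^n * Aop θ α n a),
      if_pos (Finset.mem_range.mpr (hB1 i)), pow_zero, one_mul]
    rfl
  rw [hmaster, hsum2]
  abel

/-- (Lemma `Z`.) Suppose `(∧V, d) ≅ (∧(y), 0) ⊗ (∧W, d)` with
`y ∈ V^{2m}` even, and let `θ` be the derivation dual to `y`. If `[θ]` is not a
zero divisor in `H_*(Der(∧V), D)`, then every derivation cycle of degree `≥ 2m`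
is, modulo boundaries, a multiple of `θ`. -/
theorem statement13 (A : Type) [Ring A] [Algebra ℚ A]
    (𝒜 V : ℤ → Submodule ℚ A) (d : A →ₗ[ℚ] A)
    (hS : SullivanData 𝒜 V d)
    (m : ℕ) (y : A) (hy : y ∈ V (2 * (m : ℤ))) (hdy : d y = 0)
    (W : ℤ → Submodule ℚ A) (hW : IsGradedComplement V y (2 * (m : ℤ)) W)
    (hdW : ∀ a ∈ gradedAdjoin W, d a ∈ gradedAdjoin W)
    (θ : A →ₗ[ℚ] A) (hθ : IsDerCycle 𝒜 d (2 * (m : ℤ)) θ) (hθy : θ y = 1)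
    (hθW : ∀ k : ℤ, ∀ w ∈ W k, θ w = 0)
    -- [θ] is not a zero divisor in the homology of derivations
    (hnzd : ∀ p : ℤ, 1 ≤ p → ∀ β : A →ₗ[ℚ] A, IsDerCycle 𝒜 d p β →
      (∃ η : A →ₗ[ℚ] A, IsDegDer 𝒜 (p + 2 * (m : ℤ) + 1) η ∧
        gBracket θ β (2 * (m : ℤ)) p = Dcomm d η (p + 2 * (m : ℤ) + 1)) →
      ∃ (c : ℚ) (η' : A →ₗ[ℚ] A), IsDegDer 𝒜 (p + 1) η' ∧
        β = c • θ + Dcomm d η' (p + 1)) :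
    ∀ q : ℤ, 2 * (m : ℤ) ≤ q → ∀ α : A →ₗ[ℚ] A, IsDerCycle 𝒜 d q α →
      ∃ (c : ℚ) (η : A →ₗ[ℚ] A), IsDegDer 𝒜 (q + 1) η ∧
        α = c • θ + Dcomm d η (q + 1) :=
  statement13' A 𝒜 V d hS m y hy hdy θ hθ hθy hnzd
end

section
/- Let (∧V, d) be a simply connected Sullivan minimal model and let v ∈ V^n be a Gottlieb element with dv = 0. Then there is a graded complement W of ⟨v⟩ in V and a differential d' on ∧W such that there is an isomorphism of DG algebras (∧V, d) ≅ (∧(v), 0) ⊗ (∧W, d'). -/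
variable {A : Type} [Ring A] [Algebra ℚ A]

open scoped DirectSum

namespace S14
variable {A : Type} [Ring A] [Algebra ℚ A] {𝒜 : ℤ → Submodule ℚ A}

theorem lm_ext (hint : DirectSum.IsInternal fun i => 𝒜 i) {f g : A →ₗ[ℚ] A}
    (h : ∀ i : ℤ, ∀ x ∈ 𝒜 i, f x = g x) : f = g := by
  apply LinearMap.ext_on (s := ⋃ i, (𝒜 i : Set A))
  · rw [← Submodule.iSup_eq_span, hint.submodule_iSup_eq_top]
  · intro x hx
    obtain ⟨_, ⟨i, rfl⟩, hx⟩ := hx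
    exact h i x hx

theorem exists_decomp (hint : DirectSum.IsInternal fun i => 𝒜 i) (a : A) :
    ∃ (F : Finset ℤ) (c : ℤ → A),
    (∀ i, c i ∈ 𝒜 i) ∧ a = ∑ i ∈ F, c i := by
  classical
  have ha : a ∈ ⨆ i, 𝒜 i := by rw [hint.submodule_iSup_eq_top]; trivial
  rw [Submodule.mem_iSup_iff_exists_dfinsupp'] at ha
  obtain ⟨f, hf⟩ := ha
  exact ⟨f.support, fun i => (f i : A), fun i => (f i).2, by rw [← hf]; rfl⟩

theorem sum_eq_zero (hint : DirectSum.IsInternal fun i => 𝒜 i) {F : Finset ℤ} {c : ℤ → A}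
    (hc : ∀ i ∈ F, c i ∈ 𝒜 i)
    (hsum : ∑ i ∈ F, c i = 0) : ∀ i ∈ F, c i = 0 := by
  classical
  intro i hi
  set g : ⨁ i, (𝒜 i : Submodule ℚ A) :=
    ∑ j ∈ F.attach, DirectSum.lof ℚ ℤ (fun i => (𝒜 i : Submodule ℚ A)) j.1 ⟨c j.1, hc j.1 j.2⟩
    with hgdef
  have hg0 : DirectSum.coeLinearMap (fun i => (𝒜 i : Submodule ℚ A)) g = 0 := by
    rw [hgdef, map_sum]
    have : ∀ j ∈ F.attach, DirectSum.coeLinearMap (fun i => (𝒜 i : Submodule ℚ A))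
        (DirectSum.lof ℚ ℤ (fun i => (𝒜 i : Submodule ℚ A)) j.1 ⟨c j.1, hc j.1 j.2⟩) = c j.1 := by
      intro j _; exact DirectSum.coeLinearMap_of _ _ _
    rw [Finset.sum_congr rfl this, ← Finset.sum_attach F c] at *
    exact hsum
  have hg : g = 0 := by
    apply hint.injective
    show (DirectSum.coeLinearMap fun i => 𝒜 i) g = (DirectSum.coeLinearMap fun i => 𝒜 i) 0
    rw [hg0, map_zero]
  have hcomp := congrArg (fun x : ⨁ i, (𝒜 i : Submodule ℚ A) => (x i : A)) hg
  simp only [hgdef] at hcomp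
  rw [DFinsupp.finset_sum_apply] at hcomp
  have : ∀ j ∈ F.attach, ((DirectSum.lof ℚ ℤ (fun i => (𝒜 i : Submodule ℚ A)) j.1
      ⟨c j.1, hc j.1 j.2⟩ : ⨁ i, (𝒜 i : Submodule ℚ A)) i : A)
      = if j.1 = i then c j.1 else 0 := by
    intro j _
    by_cases h : j.1 = i
    · subst h; rw [if_pos rfl, DirectSum.lof_eq_of, DirectSum.of_eq_same]
    · rw [if_neg h, DirectSum.lof_eq_of, DirectSum.of_eq_of_ne _ _ _ (Ne.symm h)]; rfl
  rw [AddSubmonoidClass.coe_finset_sum, Finset.sum_congr rfl this] at hcomp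
  rw [Finset.sum_attach F (fun j => if j = i then c j else 0)] at hcomp
  rw [Finset.sum_ite_eq' F i c] at hcomp
  simpa [hi] using hcomp

end S14

namespace S14
variable {A : Type} [Ring A] [Algebra ℚ A] {𝒜 V : ℤ → Submodule ℚ A} {d : A →ₗ[ℚ] A}

theorem decomp_unique (hint : DirectSum.IsInternal fun i => 𝒜 i) {F : Finset ℤ} {c : ℤ → A}
    (hc : ∀ i ∈ F, c i ∈ 𝒜 i) {m : ℤ} {x : A} (hx : x ∈ 𝒜 m)
    (hsum : ∑ i ∈ F, c i = x) : (m ∈ F → x = c m) ∧ (m ∉ F → x = 0) := by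
  classical
  constructor
  · intro hm
    set c' : ℤ → A := fun i => if i = m then c m - x else c i with hc'
    have hgr : ∀ i ∈ F, c' i ∈ 𝒜 i := by
      intro i hi
      by_cases h : i = m
      · subst h; simp only [hc', if_pos rfl]; exact sub_mem (hc _ hi) hx
      · simp only [hc', if_neg h]; exact hc _ hi
    have hsum' : ∑ i ∈ F, c' i = 0 := by
      rw [← Finset.add_sum_erase F c' hm, ← Finset.add_sum_erase F c hm] at *
      have : ∑ i ∈ F.erase m, c' i = ∑ i ∈ F.erase m, c i := by
        apply Finset.sum_congr rfl
        intro i hi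
        simp [hc', Finset.ne_of_mem_erase hi]
      rw [this]
      simp only [hc', if_pos rfl]
      rw [← hsum]; abel
    have := sum_eq_zero hint hgr hsum' m hm
    simp only [hc', if_pos rfl, sub_eq_zero] at this
    exact this.symm
  · intro hm
    set F' := insert m F with hF'
    set c' : ℤ → A := fun i => if i = m then -x else c i with hc'
    have hgr : ∀ i ∈ F', c' i ∈ 𝒜 i := by
      intro i hi
      by_cases h : i = m
      · subst h; simp only [hc', if_pos rfl]; exact neg_mem hx
      · simp only [hc', if_neg h]
        exact hc _ ((Finset.mem_insert.mp hi).resolve_left h)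
    have hsum' : ∑ i ∈ F', c' i = 0 := by
      rw [hF', Finset.sum_insert hm]
      have : ∑ i ∈ F, c' i = ∑ i ∈ F, c i := by
        apply Finset.sum_congr rfl
        intro i hi
        have : i ≠ m := fun h => hm (h ▸ hi)
        simp [hc', this]
      rw [this, hsum]
      simp [hc']
    have := sum_eq_zero hint hgr hsum' m (Finset.mem_insert_self m F)
    simp only [hc', if_pos rfl, neg_eq_zero] at this
    exact this

theorem iSup_mul {ι : Type} (M : ι → Submodule ℚ A) (op : ι → ι → ι)
    (h : ∀ i j, ∀ x ∈ M i, ∀ y ∈ M j, x * y ∈ M (op i j)) {x y : A}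
    (hx : x ∈ ⨆ i, M i) (hy : y ∈ ⨆ i, M i) : x * y ∈ ⨆ i, M i := by
  refine Submodule.iSup_induction (motive := fun a => a * y ∈ ⨆ i, M i) M hx ?_ ?_ ?_
  · intro i xi hxi
    refine Submodule.iSup_induction (motive := fun b => xi * b ∈ ⨆ i, M i) M hy ?_ ?_ ?_
    · intro j yj hyj; exact Submodule.mem_iSup_of_mem (op i j) (h i j xi hxi yj hyj)
    · show xi * 0 ∈ _; rw [mul_zero]; exact zero_mem _
    · intro b c hb hc; rw [mul_add]; exact add_mem hb hc
  · show (0:A) * y ∈ _; rw [zero_mul]; exact zero_mem _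
  · intro a b ha hb; rw [add_mul]; exact add_mem ha hb

end S14

namespace S14
variable {A : Type} [Ring A] [Algebra ℚ A]

theorem mem_iSup_decomp {ι : Type} [DecidableEq ι] (M : ι → Submodule ℚ A) {a : A}
    (ha : a ∈ ⨆ i, M i) :
    ∃ (F : Finset ι) (c : ι → A), (∀ i, c i ∈ M i) ∧ a = ∑ i ∈ F, c i := by
  classical
  rw [Submodule.mem_iSup_iff_exists_dfinsupp'] at ha
  obtain ⟨f, hf⟩ := ha
  exact ⟨f.support, fun i => (f i : A), fun i => (f i).2, by rw [← hf]; rfl⟩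

variable {𝒜 V : ℤ → Submodule ℚ A} {d : A →ₗ[ℚ] A}

/-- If a graded submodule family covers all generators and is multiplicatively
closed, its supremum is everything. -/
theorem iSup_eq_top_of (hS : SullivanData 𝒜 V d) (M : ℤ → Submodule ℚ A)
    (hone : (1 : A) ∈ ⨆ i, M i)
    (hmul : ∀ x y : A, x ∈ ⨆ i, M i → y ∈ ⨆ i, M i → x * y ∈ ⨆ i, M i)
    (hgen : ∀ n : ℤ, V n ≤ ⨆ i, M i) : ∀ a : A, a ∈ ⨆ i, M i := by
  intro a
  have h1 : Algebra.adjoin ℚ (⋃ n : ℤ, (V n : Set A)) ≤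
      ((⨆ i, M i).toSubalgebra hone (fun x y hx hy => hmul x y hx hy)) := by
    apply Algebra.adjoin_le
    intro x hx
    obtain ⟨_, ⟨n, rfl⟩, hx⟩ := hx
    exact hgen n hx
  rw [hS.gen] at h1
  exact h1 trivial

/-- Degree-0 part is the scalars. -/
theorem mem_A0 (hS : SullivanData 𝒜 V d) {x : A} (hx : x ∈ 𝒜 0) :
    ∃ c : ℚ, x = c • (1 : A) := by
  classical
  set M : ℤ → Submodule ℚ A := fun i => if i = 0 then Submodule.span ℚ {(1 : A)} else 𝒜 i with hM
  have hMle : ∀ i, M i ≤ 𝒜 i := by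
    intro i
    by_cases h : i = 0
    · subst h; simp only [hM, if_pos rfl]
      rw [Submodule.span_le, Set.singleton_subset_iff]
      exact hS.one_mem
    · simp only [hM, if_neg h]; exact le_rfl
  have hmul : ∀ i j, ∀ x ∈ M i, ∀ y ∈ M j, x * y ∈ M (i + j) := by
    intro i j x hx y hy
    by_cases hi : i = 0
    · subst hi
      simp only [hM, if_pos rfl] at hx
      obtain ⟨c, hc⟩ := Submodule.mem_span_singleton.mp hx
      rw [← hc, smul_mul_assoc, one_mul, zero_add]
      exact Submodule.smul_mem _ _ hy
    · by_cases hj : j = 0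
      · subst hj
        simp only [hM, if_pos rfl] at hy
        obtain ⟨c, hc⟩ := Submodule.mem_span_singleton.mp hy
        rw [← hc, mul_smul_comm, mul_one, add_zero]
        exact Submodule.smul_mem _ _ hx
      · have hxy := hS.mul_mem i j x (hMle i hx) y (hMle j hy)
        by_cases hij : i + j = 0
        · rcases lt_trichotomy i 0 with h | h | h
          · have hb : x ∈ (⊥ : Submodule ℚ A) := hS.neg_bot i h ▸ hMle i hx
            have : x = 0 := (Submodule.mem_bot ℚ).mp hb
            simp [this, zero_mem]
          · exact absurd h hi
          · have hjneg : j < 0 := by omega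
            have hb : y ∈ (⊥ : Submodule ℚ A) := hS.neg_bot j hjneg ▸ hMle j hy
            have : y = 0 := (Submodule.mem_bot ℚ).mp hb
            simp [this, zero_mem]
        · simp only [hM, if_neg hij]; exact hxy
  have htop := iSup_eq_top_of hS M
    (Submodule.mem_iSup_of_mem 0 (by simp only [hM, if_pos rfl]; exact Submodule.mem_span_singleton_self 1))
    (fun x y hx hy => iSup_mul M (· + ·) hmul hx hy)
    (fun n => by
      by_cases h : n = 0
      · subst h; rw [hS.V_zero]; exact bot_le
      · refine le_trans ?_ (le_iSup M n)
        simp only [hM, if_neg h]; exact hS.V_le n)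
  obtain ⟨F, c, hc, hsum⟩ := mem_iSup_decomp M (htop x)
  have h0 := (decomp_unique hS.internal (fun i _ => hMle i (hc i)) hx hsum.symm)
  by_cases hmem : (0 : ℤ) ∈ F
  · have := h0.1 hmem
    have hc0 : c 0 ∈ Submodule.span ℚ {(1:A)} := by
      have := hc 0; simpa [hM] using this
    obtain ⟨r, hr⟩ := Submodule.mem_span_singleton.mp hc0
    exact ⟨r, by rw [this, ← hr]⟩
  · exact ⟨0, by rw [h0.2 hmem, zero_smul]⟩

end S14

namespace S14
variable {A : Type} [Ring A] [Algebra ℚ A]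
variable {𝒜 V : ℤ → Submodule ℚ A} {d : A →ₗ[ℚ] A}

section der
variable {t : ℤ} {θ : A →ₗ[ℚ] A} {n : ℤ}

theorem theta_one (hone : (1:A) ∈ 𝒜 0) (hθd : IsDegDer 𝒜 n θ) : θ 1 = 0 := by
  have := hθd.leibniz 0 0 1 hone 1 hone
  simp only [mul_one, zero_mul, zpow_zero, one_smul, one_mul] at this
  simpa using this

theorem leib_left (hint : DirectSum.IsInternal fun i => 𝒜 i) (hθd : IsDegDer 𝒜 n θ)
    {i : ℤ} {a : A} (ha : a ∈ 𝒜 i) (x : A) :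
    θ (a * x) = θ a * x + ((-1:ℚ)^(i*n)) • (a * θ x) := by
  have : θ ∘ₗ LinearMap.mulLeft ℚ a =
      LinearMap.mulLeft ℚ (θ a) + ((-1:ℚ)^(i*n)) • (LinearMap.mulLeft ℚ a ∘ₗ θ) := by
    apply lm_ext hint
    intro j x hx
    simpa using hθd.leibniz i j a ha x hx
  exact congrFun (congrArg (fun f => f.toFun) this) x

theorem neg_one_zpow_ne (m : ℤ) : ((-1:ℚ)^m) ≠ 0 :=
  zpow_ne_zero m (by norm_num)

theorem neg_one_zpow_sq (m : ℤ) : ((-1:ℚ)^m) * ((-1:ℚ)^m) = 1 := by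
  rw [← zpow_add₀ (by norm_num : (-1:ℚ) ≠ 0)]
  have : m + m = 2 * m := by ring
  rw [this, zpow_mul]
  norm_num

theorem zpow_tt (t : ℤ) : ((-1:ℚ)^(t*t)) = (-1:ℚ)^t := by
  rcases Int.even_or_odd t with h | h
  · rw [Even.neg_one_zpow h, Even.neg_one_zpow (h.mul_left t)]
  · rw [Odd.neg_one_zpow h, Odd.neg_one_zpow (h.mul h)]

theorem zpow_ktt (t : ℤ) (k : ℕ) : ((-1:ℚ)^(((k:ℤ)*t)*t)) = ((-1:ℚ)^t)^k := by
  have h1 : ((k:ℤ)*t)*t = (t*t)*(k:ℤ) := by ring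
  rw [h1, zpow_mul, zpow_tt, zpow_natCast]

end der
end S14

namespace S14
section vsec
variable {A : Type} [Ring A] [Algebra ℚ A]
variable {𝒜 V : ℤ → Submodule ℚ A} {d : A →ₗ[ℚ] A} {t : ℤ} {v : A} {θ : A →ₗ[ℚ] A}

theorem neg_one_zpow_neg (t : ℤ) : ((-1:ℚ)^(-t)) = (-1:ℚ)^t := by
  rw [zpow_neg]
  exact inv_eq_of_mul_eq_one_right (neg_one_zpow_sq t)

theorem P_mul (hS : SullivanData 𝒜 V d) (hθd : IsDegDer 𝒜 t θ) (hv : v ∈ 𝒜 t) :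
    ∀ a b : A, v * θ (a * b) = (v * θ a) * b + a * (v * θ b) := by
  have step1 : ∀ i : ℤ, ∀ a ∈ 𝒜 i, ∀ b : A,
      v * θ (a * b) = (v * θ a) * b + a * (v * θ b) := by
    intro i a ha b
    rw [leib_left hS.internal hθd ha b]
    rw [mul_add, mul_smul_comm, mul_assoc]
    congr 1
    have hav : a * v = ((-1:ℚ)^(i*t)) • (v * a) := hS.gcomm i t a ha v hv
    have : a * (v * θ b) = ((-1:ℚ)^(i*t)) • (v * (a * θ b)) := by
      rw [← mul_assoc, hav, smul_mul_assoc, mul_assoc]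
    rw [this]
  intro a b
  have : (LinearMap.mulLeft ℚ v ∘ₗ θ) ∘ₗ LinearMap.mulRight ℚ b =
      LinearMap.mulRight ℚ b ∘ₗ (LinearMap.mulLeft ℚ v ∘ₗ θ)
      + LinearMap.mulRight ℚ (v * θ b) := by
    apply lm_ext hS.internal
    intro i a ha
    simpa [mul_assoc] using step1 i a ha b
  simpa [mul_assoc] using congrFun (congrArg (fun f => f.toFun) this) a

theorem v_sq (hS : SullivanData 𝒜 V d) (hv : v ∈ 𝒜 t) (hodd : Odd t) : v * v = 0 := by
  have h := hS.gcomm t t v hv v hv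
  rw [zpow_tt, Odd.neg_one_zpow hodd, neg_one_smul] at h
  have this2 : v * v + v * v = 0 := by
    nth_rewrite 1 [h]
    abel
  have h2 : (2:ℚ) • (v*v) = 0 := by rw [two_smul]; exact this2
  exact (smul_eq_zero.mp h2).resolve_left (by norm_num)

theorem d_mulv (hS : SullivanData 𝒜 V d) (hv : v ∈ 𝒜 t) (hdv : d v = 0) (x : A) :
    d (v * x) = ((-1:ℚ)^t) • (v * d x) := by
  rw [leib_left hS.internal hS.d_der hv x, hdv, zero_mul, zero_add]
  have he : t * (-1) = -t := by ring
  rw [he, neg_one_zpow_neg]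

theorem dP (hS : SullivanData 𝒜 V d) (hv : v ∈ 𝒜 t) (hdv : d v = 0)
    (hcyc : Dcomm d θ t = 0) (x : A) : d (v * θ x) = v * θ (d x) := by
  have hpt : ∀ y : A, d (θ y) = ((-1:ℚ)^t) • θ (d y) := by
    intro y
    have := LinearMap.congr_fun hcyc y
    simp only [Dcomm, LinearMap.sub_apply, LinearMap.comp_apply, LinearMap.smul_apply,
      LinearMap.zero_apply, sub_eq_zero] at this
    exact this
  rw [d_mulv hS hv hdv, hpt, mul_smul_comm, smul_smul, neg_one_zpow_sq, one_smul]

theorem theta_pow_mem (hθd : IsDegDer 𝒜 t θ) :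
    ∀ (k : ℕ) (i : ℤ), ∀ a ∈ 𝒜 i, ((θ^k : A →ₗ[ℚ] A)) a ∈ 𝒜 (i - (k:ℤ)*t) := by
  intro k
  induction k with
  | zero => intro i a ha; simpa using ha
  | succ k ih =>
    intro i a ha
    have h1 : ((θ^(k+1) : A →ₗ[ℚ] A)) a = θ (((θ^k : A →ₗ[ℚ] A)) a) := by
      rw [pow_succ']; rfl
    rw [h1]
    have := hθd.maps_mem _ _ (ih i a ha)
    convert this using 2
    push_cast; ring

theorem vpow_mem (hS : SullivanData 𝒜 V d) (hv : v ∈ 𝒜 t) :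
    ∀ k : ℕ, v^k ∈ 𝒜 ((k:ℤ)*t) := by
  intro k
  induction k with
  | zero => simpa using hS.one_mem
  | succ k ih =>
    have := hS.mul_mem _ _ _ ih _ hv
    rw [pow_succ]
    convert this using 2
    push_cast; ring

/-- Coefficients for `θ (v^(k+1)) = dkc t k • v^k`. -/
def dkc (t : ℤ) : ℕ → ℚ := fun k => if Even t then (k+1:ℚ) else (if Even k then 1 else 0)

theorem dkc_succ (t : ℤ) (k : ℕ) : dkc t (k+1) = 1 + (-1:ℚ)^t * dkc t k := by
  rcases Int.even_or_odd t with h | h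
  · simp only [dkc, if_pos h, Even.neg_one_zpow h]
    push_cast; ring
  · have hne : ¬ Even t := by simpa [Int.not_even_iff_odd] using h
    simp only [dkc, if_neg hne, Odd.neg_one_zpow h]
    rcases Nat.even_or_odd k with hk | hk
    · rw [if_pos hk, if_neg (by simp [Nat.even_add_one, hk])]
      ring
    · rw [if_neg (Nat.not_even_iff_odd.mpr hk), if_pos (Nat.even_add_one.mpr (Nat.not_even_iff_odd.mpr hk))]
      ring

theorem theta_vpow (hS : SullivanData 𝒜 V d) (hθd : IsDegDer 𝒜 t θ) (hv : v ∈ 𝒜 t)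
    (hθv : θ v = 1) : ∀ k : ℕ, θ (v^(k+1)) = dkc t k • v^k := by
  intro k
  induction k with
  | zero =>
    simp [dkc, hθv]
  | succ k ih =>
    have h1 : v^(k+2) = v * v^(k+1) := by rw [pow_succ']
    rw [h1, leib_left hS.internal hθd hv, hθv, one_mul, ih, zpow_tt,
      mul_smul_comm, smul_smul, dkc_succ]
    rw [← pow_succ']
    rw [add_smul, one_smul]

/-- Coefficients for the eigenvalue-type formula. -/
def ekc (t : ℤ) : ℕ → ℚ := fun k => match k with
  | 0 => 0
  | k+1 => dkc t k

theorem P_vk_x (hS : SullivanData 𝒜 V d) (hθd : IsDegDer 𝒜 t θ) (hv : v ∈ 𝒜 t)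
    (hθv : θ v = 1) (k : ℕ) (x : A) :
    v * θ (v^k * x) = ekc t k • (v^k * x) + ((-1:ℚ)^t)^k • (v^(k+1) * θ x) := by
  have hvk := vpow_mem hS hv k
  rw [leib_left hS.internal hθd hvk x, zpow_ktt, mul_add, mul_smul_comm]
  congr 1
  · match k with
    | 0 =>
      simp [theta_one hS.one_mem hθd, ekc]
    | k+1 =>
      rw [theta_vpow hS hθd hv hθv k]
      show v * (dkc t k • v ^ k * x) = ekc t (k+1) • (v ^ (k+1) * x)
      rw [smul_mul_assoc, mul_smul_comm, ← mul_assoc, ← pow_succ']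
      rfl
  · rw [← mul_assoc, ← pow_succ']

theorem P_eigen (hS : SullivanData 𝒜 V d) (hθd : IsDegDer 𝒜 t θ) (hv : v ∈ 𝒜 t)
    (hθv : θ v = 1) (k : ℕ) (b : A) (hb : v * θ b = 0) :
    v * θ (v^k * b) = (k:ℚ) • (v^k * b) := by
  have h2 : v^(k+1) * θ b = 0 := by
    rw [pow_succ, mul_assoc, hb, mul_zero]
  rw [P_vk_x hS hθd hv hθv k b, h2, smul_zero, add_zero]
  rcases Int.even_or_odd t with ht | ht
  · congr 1
    simp only [ekc, dkc, if_pos ht]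
    match k with
    | 0 => norm_num
    | k+1 => push_cast; ring
  · match k with
    | 0 => norm_num [ekc]
    | 1 => norm_num [ekc, dkc, Int.not_even_iff_odd.mpr ht]
    | (k+2) =>
      have hv2 : v^(k+2) = 0 := by
        have : v * v = 0 := v_sq hS hv ht
        calc v^(k+2) = v^k * (v * v) := by rw [pow_add, sq]
        _ = 0 := by rw [this, mul_zero]
      rw [hv2, zero_mul, smul_zero, smul_zero]

end vsec
end S14

namespace S14
section sumsec
variable {A : Type} [Ring A] [Algebra ℚ A]
variable {𝒜 V : ℤ → Submodule ℚ A} {d : A →ₗ[ℚ] A} {t : ℤ} {v : A} {θ : A →ₗ[ℚ] A}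

/-- The exponential-style coefficients `(-1)^k/k!`. -/
def gam : ℕ → ℚ := fun k => (-1:ℚ)^k / (Nat.factorial k)

theorem gam_zero : gam 0 = 1 := by norm_num [gam]

theorem key_coeff (t : ℤ) (K : ℕ) (ht : Even t) :
    gam K * ((-1:ℚ)^t)^K + gam (K+1) * ekc t (K+1) = 0 := by
  show gam K * ((-1:ℚ)^t)^K + gam (K+1) * dkc t K = 0
  rw [Even.neg_one_zpow ht, one_pow]
  simp only [gam, dkc, if_pos ht, Nat.factorial_succ]
  have h1 : ((K+1).factorial : ℚ) ≠ 0 := by positivity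
  have h0 : ((K).factorial : ℚ) ≠ 0 := by positivity
  field_simp [Nat.factorial_succ]
  push_cast; ring

theorem b_mem (hS : SullivanData 𝒜 V d) (hθd : IsDegDer 𝒜 t θ) (hv : v ∈ 𝒜 t)
    {n : ℤ} {u : A} (hu : u ∈ 𝒜 n) (k : ℕ) :
    v^k * ((θ^k : A →ₗ[ℚ] A)) u ∈ 𝒜 n := by
  have := hS.mul_mem _ _ _ (vpow_mem hS hv k) _ (theta_pow_mem hθd k n u hu)
  convert this using 2
  ring

theorem P_sum (hS : SullivanData 𝒜 V d) (hθd : IsDegDer 𝒜 t θ) (hv : v ∈ 𝒜 t)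
    (hθv : θ v = 1) (u : A) (K : ℕ) :
    v * θ (∑ k ∈ Finset.range (K+1), gam k • (v^k * ((θ^k : A →ₗ[ℚ] A)) u)) =
      (gam K * ((-1:ℚ)^t)^K) • (v^(K+1) * ((θ^(K+1) : A →ₗ[ℚ] A)) u) := by
  induction K with
  | zero =>
    rw [Finset.sum_range_one]
    simp only [pow_zero, one_mul, gam_zero, one_smul, Module.End.one_apply, pow_one,
      mul_one, one_pow]
    rw [zero_add, pow_one, pow_one]
  | succ K ih =>
    rw [Finset.sum_range_succ, map_add, mul_add, ih, map_smul, mul_smul_comm]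
    have hx : θ (((θ^(K+1) : A →ₗ[ℚ] A)) u) = ((θ^(K+2) : A →ₗ[ℚ] A)) u := by
      rw [pow_succ' (θ) (K+1)]; rfl
    rw [P_vk_x hS hθd hv hθv (K+1) (((θ^(K+1) : A →ₗ[ℚ] A)) u), hx]
    rw [smul_add, smul_smul, smul_smul, ← add_assoc]
    have hzero : (gam K * ((-1:ℚ)^t)^K) • (v^(K+1) * ((θ^(K+1) : A →ₗ[ℚ] A)) u)
        + (gam (K+1) * ekc t (K+1)) • (v^(K+1) * ((θ^(K+1) : A →ₗ[ℚ] A)) u) = 0 := by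
      rw [← add_smul]
      rcases Int.even_or_odd t with ht | ht
      · rw [key_coeff t K ht, zero_smul]
      · match K with
        | 0 =>
          have : gam 0 * ((-1:ℚ)^t)^0 + gam 1 * ekc t 1 = 0 := by
            show gam 0 * ((-1:ℚ)^t)^0 + gam 1 * dkc t 0 = 0
            simp [gam, dkc, Int.not_even_iff_odd.mpr ht]
          rw [this, zero_smul]
        | K+1 =>
          have hv0 : v^(K+2) = 0 := by
            have hvv : v * v = 0 := v_sq hS hv ht
            calc v^(K+2) = v^K * (v * v) := by rw [pow_add, sq]
            _ = 0 := by rw [hvv, mul_zero]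
          rw [hv0, zero_mul, smul_zero]
    rw [hzero, zero_add]

theorem P_sum_zero (hS : SullivanData 𝒜 V d) (hθd : IsDegDer 𝒜 t θ) (hv : v ∈ 𝒜 t)
    (hθv : θ v = 1) (ht2 : 2 ≤ t) {n : ℤ} {u : A} (hu : u ∈ 𝒜 n) (hn : 0 ≤ n) :
    v * θ (∑ k ∈ Finset.range (n.toNat+1), gam k • (v^k * ((θ^k : A →ₗ[ℚ] A)) u)) = 0 := by
  rw [P_sum hS hθd hv hθv u n.toNat]
  have hzero : ((θ^(n.toNat+1) : A →ₗ[ℚ] A)) u = 0 := by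
    have hmem := theta_pow_mem hθd (n.toNat+1) n u hu
    have hneg : n - ((n.toNat+1 : ℕ):ℤ)*t < 0 := by
      have : ((n.toNat+1 : ℕ):ℤ) = n.toNat + 1 := by push_cast; ring
      rw [this]
      have h1 : (n.toNat : ℤ) = n := Int.toNat_of_nonneg hn
      nlinarith [h1]
    rw [hS.neg_bot _ hneg] at hmem
    simpa using hmem
  rw [hzero, mul_zero, smul_zero]

end sumsec
end S14

namespace S14
section gensec
variable {A : Type} [Ring A] [Algebra ℚ A]
variable {𝒜 V : ℤ → Submodule ℚ A} {d : A →ₗ[ℚ] A}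

theorem closure_graded (hS : SullivanData 𝒜 V d) (M : Submodule ℚ A) (h1 : (1:A) ∈ M)
    (hmul : ∀ x y : A, x ∈ M → y ∈ M → x * y ∈ M) :
    ∀ y ∈ Submonoid.closure (⋃ n : ℤ, (V n : Set A)),
      ∃ m : ℤ, 0 ≤ m ∧ y ∈ 𝒜 m ∧ ((∀ n : ℤ, n ≤ m → V n ≤ M) → y ∈ M) := by
  intro y hy
  induction hy using Submonoid.closure_induction with
  | mem x hx =>
    obtain ⟨_, ⟨n, rfl⟩, hx⟩ := hx
    by_cases hn : 0 ≤ n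
    · exact ⟨n, hn, hS.V_le n hx, fun h' => h' n le_rfl hx⟩
    · have : x ∈ (⊥ : Submodule ℚ A) := hS.neg_bot n (by omega) ▸ hS.V_le n hx
      have hx0 : x = 0 := (Submodule.mem_bot ℚ).mp this
      exact ⟨0, le_rfl, hx0 ▸ zero_mem _, fun _ => hx0 ▸ zero_mem _⟩
  | one => exact ⟨0, le_rfl, hS.one_mem, fun _ => h1⟩
  | mul x y' hx hy' ihx ihy =>
    obtain ⟨m₁, hm₁, hx𝒜, hxM⟩ := ihx
    obtain ⟨m₂, hm₂, hy𝒜, hyM⟩ := ihy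
    refine ⟨m₁ + m₂, by omega, hS.mul_mem _ _ _ hx𝒜 _ hy𝒜, fun h' => ?_⟩
    exact hmul _ _ (hxM fun n hn => h' n (by omega)) (hyM fun n hn => h' n (by omega))

theorem grade_le_of (hS : SullivanData 𝒜 V d) (M : Submodule ℚ A) (h1 : (1:A) ∈ M)
    (hmul : ∀ x y : A, x ∈ M → y ∈ M → x * y ∈ M)
    (hstep : ∀ n : ℤ, (∀ j : ℤ, j < n → 𝒜 j ≤ M) → V n ≤ M) :
    ∀ n : ℤ, 𝒜 n ≤ M := by
  classical
  have main : ∀ N : ℕ, ∀ i : ℤ, i < N → 𝒜 i ≤ M := by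
    intro N
    induction N with
    | zero => intro i hi; rw [hS.neg_bot i (by exact_mod_cast hi)]; exact bot_le
    | succ N ih =>
      -- enough to handle i = N
      have hN : 𝒜 (N:ℤ) ≤ M := by
        have hgen_all : ∀ n : ℤ, n ≤ (N:ℤ) → V n ≤ M := by
          intro n hn
          rcases lt_or_eq_of_le hn with h | h
          · exact le_trans (hS.V_le n) (ih n h)
          · subst h; exact hstep _ ih
        intro x hx
        have hx' : x ∈ Subalgebra.toSubmodule (Algebra.adjoin ℚ (⋃ n : ℤ, (V n : Set A))) := by
          rw [hS.gen]; trivial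
        rw [Algebra.adjoin_eq_span] at hx'
        rw [Submodule.mem_span_set'] at hx'
        obtain ⟨num, f, g, hsum⟩ := hx'
        have hdeg : ∀ i : Fin num, ∃ m : ℤ, 0 ≤ m ∧ (g i : A) ∈ 𝒜 m ∧
            ((∀ n : ℤ, n ≤ m → V n ≤ M) → (g i : A) ∈ M) :=
          fun i => closure_graded hS M h1 hmul (g i) (g i).2
        choose deg hdeg0 hdeg𝒜 hdegM using hdeg
        set c : ℤ → A := fun m => ∑ i ∈ Finset.univ.filter (fun i => deg i = m),
          f i • (g i : A) with hc
        have hcmem : ∀ m, c m ∈ 𝒜 m := by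
          intro m
          apply Submodule.sum_mem
          intro i hi
          have : deg i = m := (Finset.mem_filter.mp hi).2
          exact Submodule.smul_mem _ _ (this ▸ hdeg𝒜 i)
        set F : Finset ℤ := Finset.univ.image deg with hF
        have hsum' : ∑ m ∈ F, c m = x := by
          rw [hF, hc]
          rw [Finset.sum_fiberwise_of_maps_to (fun i _ => Finset.mem_image_of_mem deg
            (Finset.mem_univ i)) (fun i => f i • (g i : A))]
          exact hsum
        have := decomp_unique hS.internal (fun i _ => hcmem i) hx hsum'
        by_cases hmem : (N:ℤ) ∈ F
        · rw [this.1 hmem]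
          apply Submodule.sum_mem
          intro i hi
          have hdi : deg i = (N:ℤ) := (Finset.mem_filter.mp hi).2
          refine Submodule.smul_mem _ _ (hdegM i fun n hn => hgen_all n ?_)
          omega
        · rw [this.2 hmem]; exact zero_mem _
      intro i hi
      have hi' : i < (N:ℤ) + 1 := by push_cast at hi ⊢; omega
      rcases lt_or_eq_of_le (Int.lt_add_one_iff.mp hi') with h | h
      · exact ih i h
      · subst h; exact hN
  intro n
  by_cases hn : 0 ≤ n
  · exact main (n.toNat + 1) n (by omega)
  · rw [hS.neg_bot n (by omega)]; exact bot_le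

end gensec
end S14

namespace S14
section phisec
variable {A : Type} [Ring A] [Algebra ℚ A]
variable {𝒜 V : ℤ → Submodule ℚ A} {d : A →ₗ[ℚ] A} {t : ℤ} {v : A} {θ : A →ₗ[ℚ] A}

theorem exists_Phi (hS : SullivanData 𝒜 V d) (hθd : IsDegDer 𝒜 t θ)
    (hv : v ∈ V t) :
    ∃ Φ : A →ₐ[ℚ] A,
      (∀ u ∈ V t, Φ u = u) ∧
      (∀ n : ℤ, n ≠ t → ∀ u ∈ V n, Φ u =
        ∑ k ∈ Finset.range (n.toNat+1), gam k • (v^k * ((θ^k : A →ₗ[ℚ] A)) u)) := by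
  classical
  have hv𝒜 : v ∈ 𝒜 t := hS.V_le t hv
  set Fm : ℤ → (A →ₗ[ℚ] A) := fun m =>
    ∑ k ∈ Finset.range (m.toNat+1), gam k • (LinearMap.mulLeft ℚ (v^k) ∘ₗ (θ^k : A →ₗ[ℚ] A))
    with hFm
  have hFm_apply : ∀ (m : ℤ) (x : A), Fm m x =
      ∑ k ∈ Finset.range (m.toNat+1), gam k • (v^k * ((θ^k : A →ₗ[ℚ] A)) x) := by
    intro m x
    rw [hFm]
    simp [LinearMap.sum_apply]
  set G : ∀ m : ℤ, (𝒜 m →ₗ[ℚ] A) := fun m =>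
    if m = t then (𝒜 m).subtype else (Fm m) ∘ₗ (𝒜 m).subtype with hG
  set e : (⨁ i : ℤ, (𝒜 i : Submodule ℚ A)) ≃ₗ[ℚ] A :=
    LinearEquiv.ofBijective (DirectSum.coeLinearMap fun i => 𝒜 i) hS.internal with he
  set f : A →ₗ[ℚ] A := (DirectSum.toModule ℚ ℤ A G) ∘ₗ e.symm.toLinearMap with hf
  have hf_graded : ∀ (m : ℤ) (x : A) (hx : x ∈ 𝒜 m), f x = G m ⟨x, hx⟩ := by
    intro m x hx
    have h1 : e.symm x = DirectSum.lof ℚ ℤ (fun i => (𝒜 i : Submodule ℚ A)) m ⟨x, hx⟩ := by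
      rw [LinearEquiv.symm_apply_eq, he]
      show x = DirectSum.coeLinearMap (fun i => 𝒜 i) (DirectSum.lof ℚ ℤ (fun i => (𝒜 i : Submodule ℚ A)) m ⟨x, hx⟩)
      rw [DirectSum.lof_eq_of, DirectSum.coeLinearMap_of]
    rw [hf, LinearMap.comp_apply, LinearEquiv.coe_toLinearMap, h1, DirectSum.toModule_lof]
  have hfV : ∀ n : ℤ, ∀ u ∈ V n, f u ∈ 𝒜 n := by
    intro n u hu
    have hu𝒜 : u ∈ 𝒜 n := hS.V_le n hu
    rw [hf_graded n u hu𝒜, hG]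
    by_cases h : n = t
    · simp only [if_pos h]; exact hu𝒜
    · simp only [if_neg h, LinearMap.comp_apply, Submodule.coe_subtype]
      rw [hFm_apply]
      apply Submodule.sum_mem
      intro k _
      exact Submodule.smul_mem _ _ (b_mem hS hθd hv𝒜 hu𝒜 k)
  obtain ⟨Φ, hΦ, -⟩ := hS.free ⟨A, 𝒜⟩ hS.gcomm f hfV
  refine ⟨Φ, ?_, ?_⟩
  · intro u hu
    rw [hΦ t u hu, hf_graded t u (hS.V_le t hu), hG]
    simp only [if_pos rfl]
    rfl
  · intro n hn u hu
    rw [hΦ n u hu, hf_graded n u (hS.V_le n hu), hG]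
    simp only [if_neg hn, LinearMap.comp_apply, Submodule.coe_subtype]
    exact hFm_apply n u

end phisec
end S14

namespace S14
section bijsec
variable {A : Type} [Ring A] [Algebra ℚ A]
variable {𝒜 V : ℤ → Submodule ℚ A} {d : A →ₗ[ℚ] A} {t : ℤ} {v : A} {θ : A →ₗ[ℚ] A}
  {Φ : A →ₐ[ℚ] A}

theorem Phi_grade (hS : SullivanData 𝒜 V d) (hθd : IsDegDer 𝒜 t θ) (hv : v ∈ V t)
    (hΦt : ∀ u ∈ V t, Φ u = u)
    (hΦn : ∀ n : ℤ, n ≠ t → ∀ u ∈ V n, Φ u =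
      ∑ k ∈ Finset.range (n.toNat+1), gam k • (v^k * ((θ^k : A →ₗ[ℚ] A)) u)) :
    ∀ m : ℤ, ∀ a ∈ 𝒜 m, Φ a ∈ 𝒜 m := by
  classical
  have hv𝒜 : v ∈ 𝒜 t := hS.V_le t hv
  set N : ℤ → Submodule ℚ A := fun i => 𝒜 i ⊓ Submodule.comap Φ.toLinearMap (𝒜 i) with hN
  have hmulN : ∀ i j, ∀ x ∈ N i, ∀ y ∈ N j, x * y ∈ N (i+j) := by
    intro i j x hx y hy
    refine ⟨hS.mul_mem i j x hx.1 y hy.1, ?_⟩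
    show Φ (x * y) ∈ 𝒜 (i+j)
    rw [map_mul]
    exact hS.mul_mem i j _ hx.2 _ hy.2
  have htop := iSup_eq_top_of hS N
    (Submodule.mem_iSup_of_mem 0 ⟨hS.one_mem, by show Φ 1 ∈ 𝒜 0; rw [map_one]; exact hS.one_mem⟩)
    (fun x y hx hy => iSup_mul N (· + ·) hmulN hx hy)
    (fun n => by
      intro u hu
      have hu𝒜 : u ∈ 𝒜 n := hS.V_le n hu
      refine Submodule.mem_iSup_of_mem n ⟨hu𝒜, ?_⟩
      show Φ u ∈ 𝒜 n
      by_cases h : n = t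
      · subst h; rw [hΦt u hu]; exact hu𝒜
      · rw [hΦn n h u hu]
        apply Submodule.sum_mem
        intro k _
        exact Submodule.smul_mem _ _ (b_mem hS hθd hv𝒜 hu𝒜 k))
  intro m a ha
  obtain ⟨F, c, hc, hsum⟩ := mem_iSup_decomp N (htop a)
  have := decomp_unique hS.internal (fun i _ => (hc i).1) ha hsum.symm
  by_cases hm : m ∈ F
  · rw [this.1 hm]; exact (hc m).2
  · rw [this.2 hm, map_zero]; exact zero_mem _

theorem ideal_J (hS : SullivanData 𝒜 V d) (hv : v ∈ 𝒜 t) (a x : A) :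
    a * (v * x) ∈ LinearMap.range (LinearMap.mulLeft ℚ v) := by
  have ha : a ∈ ⨆ i, 𝒜 i := by rw [hS.internal.submodule_iSup_eq_top]; trivial
  refine Submodule.iSup_induction (motive := fun a => a * (v * x) ∈
    LinearMap.range (LinearMap.mulLeft ℚ v)) _ ha ?_ ?_ ?_
  · intro i a ha
    have hav : a * v = ((-1:ℚ)^(i*t)) • (v * a) := hS.gcomm i t a ha v hv
    refine ⟨((-1:ℚ)^(i*t)) • (a * x), ?_⟩
    rw [LinearMap.mulLeft_apply, mul_smul_comm, ← mul_assoc, ← mul_assoc, ← smul_mul_assoc, ← hav]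
  · show (0:A) * (v * x) ∈ _
    rw [zero_mul]; exact zero_mem _
  · intro y z hy hz
    rw [add_mul]; exact add_mem hy hz

theorem eta_J (hS : SullivanData 𝒜 V d) (hv : v ∈ V t)
    (hΦt : ∀ u ∈ V t, Φ u = u)
    (hΦn : ∀ n : ℤ, n ≠ t → ∀ u ∈ V n, Φ u =
      ∑ k ∈ Finset.range (n.toNat+1), gam k • (v^k * ((θ^k : A →ₗ[ℚ] A)) u)) :
    ∀ a : A, Φ a - a ∈ LinearMap.range (LinearMap.mulLeft ℚ v) := by
  have hv𝒜 : v ∈ 𝒜 t := hS.V_le t hv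
  intro a
  have ha : a ∈ Algebra.adjoin ℚ (⋃ n : ℤ, (V n : Set A)) := by rw [hS.gen]; trivial
  induction ha using Algebra.adjoin_induction with
  | mem x hx =>
    obtain ⟨_, ⟨n, rfl⟩, hx⟩ := hx
    by_cases h : n = t
    · subst h; rw [hΦt x hx, sub_self]; exact zero_mem _
    · rw [hΦn n h x hx, Finset.sum_range_succ']
      have h0 : gam 0 • (v^0 * ((θ^0 : A →ₗ[ℚ] A)) x) = x := by
        simp [gam_zero]
      rw [h0, add_sub_cancel_right]
      apply Submodule.sum_mem
      intro k _
      refine ⟨gam (k+1) • (v^k * ((θ^(k+1) : A →ₗ[ℚ] A)) x), ?_⟩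
      rw [LinearMap.mulLeft_apply, mul_smul_comm, ← mul_assoc, ← pow_succ']
  | algebraMap r =>
    rw [AlgHom.commutes, sub_self]; exact zero_mem _
  | add x y hx hy ihx ihy =>
    rw [map_add]
    have : Φ x + Φ y - (x + y) = (Φ x - x) + (Φ y - y) := by abel
    rw [this]; exact add_mem ihx ihy
  | mul x y hx hy ihx ihy =>
    rw [map_mul]
    have : Φ x * Φ y - x * y = (Φ x - x) * Φ y + x * (Φ y - y) := by noncomm_ring
    rw [this]
    apply add_mem
    · obtain ⟨z, hz⟩ := ihx
      rw [LinearMap.mulLeft_apply] at hz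
      rw [← hz, mul_assoc]
      exact ⟨z * Φ y, by rw [LinearMap.mulLeft_apply]⟩
    · obtain ⟨z, hz⟩ := ihy
      rw [LinearMap.mulLeft_apply] at hz
      rw [← hz]
      exact ideal_J hS hv𝒜 x z

end bijsec
end S14

namespace S14
section bijsec2
variable {A : Type} [Ring A] [Algebra ℚ A]
variable {𝒜 V : ℤ → Submodule ℚ A} {d : A →ₗ[ℚ] A} {t : ℤ} {v : A} {θ : A →ₗ[ℚ] A}
  {Φ : A →ₐ[ℚ] A}

theorem eta_Jk (hv : v ∈ V t) (hΦt : ∀ u ∈ V t, Φ u = u)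
    (hJ1 : ∀ a : A, Φ a - a ∈ LinearMap.range (LinearMap.mulLeft ℚ v)) (k : ℕ) (x : A)
    (hx : x ∈ LinearMap.range (LinearMap.mulLeft ℚ (v^k))) :
    Φ x - x ∈ LinearMap.range (LinearMap.mulLeft ℚ (v^(k+1))) := by
  obtain ⟨y, hy⟩ := hx
  rw [LinearMap.mulLeft_apply] at hy
  obtain ⟨z, hz⟩ := hJ1 y
  rw [LinearMap.mulLeft_apply] at hz
  have hΦv : Φ v = v := hΦt v hv
  have : Φ x = v^k * Φ y := by rw [← hy, map_mul, map_pow, hΦv]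
  refine ⟨z, ?_⟩
  rw [LinearMap.mulLeft_apply, this, ← hy, ← mul_sub, ← hz, pow_succ, mul_assoc]

theorem Jbot (hS : SullivanData 𝒜 V d) (hv : v ∈ 𝒜 t) {k : ℕ} {m : ℤ}
    (hkm : m < (k:ℤ)*t) {x : A} (hx : x ∈ LinearMap.range (LinearMap.mulLeft ℚ (v^k)))
    (hxm : x ∈ 𝒜 m) : x = 0 := by
  classical
  obtain ⟨y, hy⟩ := hx
  rw [LinearMap.mulLeft_apply] at hy
  obtain ⟨F, c, hc, hsum⟩ := exists_decomp hS.internal y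
  set F' : Finset ℤ := F.image (fun i => (k:ℤ)*t + i) with hF'
  set c' : ℤ → A := fun j => v^k * c (j - (k:ℤ)*t) with hc'
  have hc'mem : ∀ j, c' j ∈ 𝒜 j := by
    intro j
    have := hS.mul_mem ((k:ℤ)*t) (j - (k:ℤ)*t) _ (vpow_mem hS hv k) _ (hc (j - (k:ℤ)*t))
    convert this using 2
    ring
  have hsum' : ∑ j ∈ F', c' j = x := by
    rw [hF', Finset.sum_image (by intro a _ b _ h; exact add_left_cancel h)]
    have : ∀ i ∈ F, c' ((k:ℤ)*t + i) = v^k * c i := by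
      intro i _
      rw [hc']
      congr 1
      ring_nf
    rw [Finset.sum_congr rfl this, ← Finset.mul_sum, ← hsum, hy]
  have := decomp_unique hS.internal (fun j _ => hc'mem j) hxm hsum'
  by_cases hm : m ∈ F'
  · rw [this.1 hm, hc']
    have : c (m - (k:ℤ)*t) = 0 := by
      have hneg : m - (k:ℤ)*t < 0 := by omega
      have := hc (m - (k:ℤ)*t)
      rw [hS.neg_bot _ hneg] at this
      simpa using this
    show v ^ k * c (m - (k:ℤ)*t) = 0
    rw [this, mul_zero]
  · exact this.2 hm

theorem Phi_inj_piece (hS : SullivanData 𝒜 V d) (hv : v ∈ V t) (ht2 : 2 ≤ t)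
    (hΦt : ∀ u ∈ V t, Φ u = u)
    (hJ1 : ∀ a : A, Φ a - a ∈ LinearMap.range (LinearMap.mulLeft ℚ v))
    (hgr : ∀ m : ℤ, ∀ a ∈ 𝒜 m, Φ a ∈ 𝒜 m)
    {m : ℤ} {x : A} (hx : x ∈ 𝒜 m) (hx0 : Φ x = 0) : x = 0 := by
  have hv𝒜 : v ∈ 𝒜 t := hS.V_le t hv
  by_cases hm : 0 ≤ m
  · have hJ : ∀ j : ℕ, x ∈ LinearMap.range (LinearMap.mulLeft ℚ (v^j)) := by
      intro j
      induction j with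
      | zero => exact ⟨x, by rw [LinearMap.mulLeft_apply, pow_zero, one_mul]⟩
      | succ j ih =>
        have := eta_Jk hv hΦt hJ1 j x ih
        rw [hx0, zero_sub] at this
        have := neg_mem this
        rwa [neg_neg] at this
    refine Jbot hS hv𝒜 (k := m.toNat + 1) ?_ (hJ _) hx
    have h1 : (m.toNat : ℤ) = m := Int.toNat_of_nonneg hm
    push_cast [h1]
    nlinarith [mul_le_mul_of_nonneg_left ht2 (show (0:ℤ) ≤ m + 1 by omega)]
  · have : x ∈ (⊥ : Submodule ℚ A) := hS.neg_bot m (by omega) ▸ hx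
    simpa using this

theorem Phi_inj (hS : SullivanData 𝒜 V d) (hv : v ∈ V t) (ht2 : 2 ≤ t)
    (hΦt : ∀ u ∈ V t, Φ u = u)
    (hJ1 : ∀ a : A, Φ a - a ∈ LinearMap.range (LinearMap.mulLeft ℚ v))
    (hgr : ∀ m : ℤ, ∀ a ∈ 𝒜 m, Φ a ∈ 𝒜 m) :
    Function.Injective Φ := by
  rw [injective_iff_map_eq_zero]
  intro a ha0
  obtain ⟨F, c, hc, hsum⟩ := exists_decomp hS.internal a
  have hsum0 : ∑ i ∈ F, Φ (c i) = 0 := by rw [← map_sum, ← hsum, ha0]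
  have hzero := sum_eq_zero hS.internal (fun i _ => hgr i (c i) (hc i)) hsum0
  rw [hsum]
  apply Finset.sum_eq_zero
  intro i hi
  exact Phi_inj_piece hS hv ht2 hΦt hJ1 hgr (hc i) (hzero i hi)

theorem Phi_surj_piece (hS : SullivanData 𝒜 V d) (hv : v ∈ V t) (ht2 : 2 ≤ t)
    (hΦt : ∀ u ∈ V t, Φ u = u)
    (hJ1 : ∀ a : A, Φ a - a ∈ LinearMap.range (LinearMap.mulLeft ℚ v))
    (hgr : ∀ m : ℤ, ∀ a ∈ 𝒜 m, Φ a ∈ 𝒜 m) :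
    ∀ (m : ℤ), ∀ y ∈ 𝒜 m, ∃ x ∈ 𝒜 m, Φ x = y := by
  have hv𝒜 : v ∈ 𝒜 t := hS.V_le t hv
  have main : ∀ (D : ℕ) (j : ℕ) (m : ℤ), m < ((j:ℤ) + D)*t → ∀ y ∈ 𝒜 m,
      y ∈ LinearMap.range (LinearMap.mulLeft ℚ (v^j)) → ∃ x ∈ 𝒜 m, Φ x = y := by
    intro D
    induction D with
    | zero =>
      intro j m hm y hy𝒜 hyJ
      have : y = 0 := Jbot hS hv𝒜 (by push_cast at hm; rw [add_zero] at hm; exact hm) hyJ hy𝒜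
      exact ⟨0, zero_mem _, by rw [map_zero, this]⟩
    | succ D ih =>
      intro j m hm y hy𝒜 hyJ
      have hη : Φ y - y ∈ LinearMap.range (LinearMap.mulLeft ℚ (v^(j+1))) :=
        eta_Jk hv hΦt hJ1 j y hyJ
      have hη𝒜 : Φ y - y ∈ 𝒜 m := sub_mem (hgr m y hy𝒜) hy𝒜
      obtain ⟨x', hx'𝒜, hx'⟩ := ih (j+1) m (by
        push_cast at hm ⊢
        have : ((j:ℤ) + 1 + (D:ℤ)) * t = ((j:ℤ) + ((D:ℤ) + 1)) * t := by ring
        rw [this]; exact hm) (Φ y - y) hη𝒜 hη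
      refine ⟨y - x', sub_mem hy𝒜 hx'𝒜, ?_⟩
      rw [map_sub, hx']
      abel
  intro m y hy
  by_cases hm : 0 ≤ m
  · refine main (m.toNat + 1) 0 m ?_ y hy ⟨y, by rw [LinearMap.mulLeft_apply, pow_zero, one_mul]⟩
    have h1 : (m.toNat : ℤ) = m := Int.toNat_of_nonneg hm
    push_cast [h1]
    nlinarith [mul_le_mul_of_nonneg_left ht2 (show (0:ℤ) ≤ m + 1 by omega)]
  · have : y = 0 := by
      have := hS.neg_bot m (by omega) ▸ hy
      simpa using this
    exact ⟨0, zero_mem _, by rw [map_zero, this]⟩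

theorem Phi_surj (hS : SullivanData 𝒜 V d) (hv : v ∈ V t) (ht2 : 2 ≤ t)
    (hΦt : ∀ u ∈ V t, Φ u = u)
    (hJ1 : ∀ a : A, Φ a - a ∈ LinearMap.range (LinearMap.mulLeft ℚ v))
    (hgr : ∀ m : ℤ, ∀ a ∈ 𝒜 m, Φ a ∈ 𝒜 m) :
    Function.Surjective Φ := by
  intro y
  obtain ⟨F, c, hc, hsum⟩ := exists_decomp hS.internal y
  have : ∀ i : ℤ, ∃ x, x ∈ 𝒜 i ∧ Φ x = c i := by
    intro i
    obtain ⟨x, hx, hΦx⟩ := Phi_surj_piece hS hv ht2 hΦt hJ1 hgr i (c i) (hc i)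
    exact ⟨x, hx, hΦx⟩
  choose x hx𝒜 hΦx using this
  exact ⟨∑ i ∈ F, x i, by rw [map_sum, hsum]; exact Finset.sum_congr rfl fun i _ => hΦx i⟩

end bijsec2
end S14

namespace S14
section vdm
variable {M : Type} [AddCommGroup M] [Module ℚ M]

theorem vandermonde : ∀ (F : Finset ℕ) (u : ℕ → M),
    (∀ j : ℕ, 1 ≤ j → ∑ k ∈ F, ((k:ℚ)^j) • u k = 0) → ∀ k ∈ F, k ≠ 0 → u k = 0 := by
  classical
  intro F
  induction F using Finset.strongInduction with
  | _ F ih =>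
    intro u hu k hk hk0
    have hne : F.Nonempty := ⟨k, hk⟩
    set m := F.max' hne with hm
    have hmF : m ∈ F := F.max'_mem hne
    set G := F.erase m with hGdef
    have hsub : G ⊂ F := Finset.erase_ssubset hmF
    have key : ∀ j : ℕ, 1 ≤ j →
        ∑ k ∈ G, ((k:ℚ)^j) • (((k:ℚ) - (m:ℚ)) • u k) = 0 := by
      intro j hj
      have h1 := hu (j+1) (by omega)
      have h2 := hu j hj
      rw [← Finset.add_sum_erase F _ hmF] at h1 h2
      have g1 : ∑ k ∈ G, ((k:ℚ)^(j+1)) • u k = -(((m:ℚ)^(j+1)) • u m) :=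
        eq_neg_of_add_eq_zero_right h1
      have g2 : ∑ k ∈ G, ((k:ℚ)^j) • u k = -(((m:ℚ)^j) • u m) :=
        eq_neg_of_add_eq_zero_right h2
      have expand : ∀ k ∈ G, ((k:ℚ)^j) • (((k:ℚ) - (m:ℚ)) • u k)
          = ((k:ℚ)^(j+1)) • u k - (m:ℚ) • (((k:ℚ)^j) • u k) := by
        intro k _
        rw [smul_smul, smul_smul, ← sub_smul]
        congr 1
        ring
      rw [Finset.sum_congr rfl expand, Finset.sum_sub_distrib, ← Finset.smul_sum, g1, g2,
        smul_neg, smul_smul]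
      rw [pow_succ, mul_comm ((m:ℚ)^j) (m:ℚ)]
      abel
    by_cases hkm : k = m
    · rw [hkm]
      have h2 := hu 1 le_rfl
      rw [← Finset.add_sum_erase F _ hmF] at h2
      have hGzero : ∑ k ∈ G, ((k:ℚ)^1) • u k = 0 := by
        apply Finset.sum_eq_zero
        intro x hx
        by_cases hx0 : x = 0
        · subst hx0; simp
        · have hux : u x = 0 := by
            have hker := ih G hsub (fun k' => ((k':ℚ) - (m:ℚ)) • u k') key x hx hx0
            have hxm : x ≠ m := Finset.ne_of_mem_erase hx
            have hsc : ((x:ℚ) - (m:ℚ)) ≠ 0 := by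
              intro h
              exact hxm (by exact_mod_cast sub_eq_zero.mp h)
            exact (smul_eq_zero.mp hker).resolve_left hsc
          rw [hux, smul_zero]
      rw [hGzero, add_zero] at h2
      have hm0 : m ≠ 0 := hkm ▸ hk0
      have hsc : ((m:ℚ)^1) ≠ 0 := by
        simpa using (by exact_mod_cast hm0 : (m:ℚ) ≠ 0)
      exact (smul_eq_zero.mp h2).resolve_left hsc
    · have hkG : k ∈ G := Finset.mem_erase.mpr ⟨hkm, hk⟩
      have hker := ih G hsub (fun k' => ((k':ℚ) - (m:ℚ)) • u k') key k hkG hk0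
      have hsc : ((k:ℚ) - (m:ℚ)) ≠ 0 := by
        intro h
        exact hkm (by exact_mod_cast sub_eq_zero.mp h)
      exact (smul_eq_zero.mp hker).resolve_left hsc

end vdm
end S14

namespace S14
section bsec
variable {A : Type} [Ring A] [Algebra ℚ A]
variable {𝒜 V : ℤ → Submodule ℚ A} {d : A →ₗ[ℚ] A} {t : ℤ} {v : A} {θ : A →ₗ[ℚ] A}

theorem adjoin_graded (hS : SullivanData 𝒜 V d) (X : Set A)
    (hX : ∀ x ∈ X, ∃ i : ℤ, x ∈ 𝒜 i) :
    ∀ b ∈ Algebra.adjoin ℚ X,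
      b ∈ ⨆ i : ℤ, (Subalgebra.toSubmodule (Algebra.adjoin ℚ X) ⊓ 𝒜 i) := by
  set B := Algebra.adjoin ℚ X with hB
  set N : ℤ → Submodule ℚ A := fun i => Subalgebra.toSubmodule B ⊓ 𝒜 i with hN
  have hmulN : ∀ i j, ∀ x ∈ N i, ∀ y ∈ N j, x * y ∈ N (i+j) :=
    fun i j x hx y hy => ⟨Subalgebra.mul_mem B hx.1 hy.1, hS.mul_mem i j x hx.2 y hy.2⟩
  have hR : B ≤ ((⨆ i, N i).toSubalgebra
      (Submodule.mem_iSup_of_mem 0 ⟨one_mem B, hS.one_mem⟩)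
      (fun x y hx hy => iSup_mul N (· + ·) hmulN hx hy)) := by
    apply Algebra.adjoin_le
    intro x hx
    obtain ⟨i, hi⟩ := hX x hx
    exact Submodule.mem_iSup_of_mem i ⟨Algebra.subset_adjoin hx, hi⟩
  exact fun b hb => hR hb

theorem ker_le_B (hS : SullivanData 𝒜 V d) (hθd : IsDegDer 𝒜 t θ) (hv : v ∈ 𝒜 t)
    (hθv : θ v = 1) (B : Subalgebra ℚ A)
    (hBk : ∀ b ∈ B, v * θ b = 0)
    (htop : ∀ a : A, a ∈ ⨆ k : ℕ,
      Submodule.map (LinearMap.mulLeft ℚ (v^k)) (Subalgebra.toSubmodule B))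
    {x : A} (hx : v * θ x = 0) : x ∈ B := by
  classical
  obtain ⟨F, y, hy, hsum⟩ := mem_iSup_decomp
    (fun k : ℕ => Submodule.map (LinearMap.mulLeft ℚ (v^k)) (Subalgebra.toSubmodule B)) (htop x)
  have hyP : ∀ k : ℕ, v * θ (y k) = ((k:ℚ)) • y k := by
    intro k
    obtain ⟨b, hb, hvb⟩ := hy k
    rw [LinearMap.mulLeft_apply] at hvb
    rw [← hvb]
    exact P_eigen hS hθd hv hθv k b (hBk b hb)
  have hiter : ∀ j : ℕ, 1 ≤ j → ∑ k ∈ F, ((k:ℚ)^j) • y k = 0 := by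
    intro j hj
    induction j with
    | zero => omega
    | succ j ihj =>
      by_cases hj0 : j = 0
      · subst hj0
        have : ∑ k ∈ F, ((k:ℚ)^1) • y k = v * θ x := by
          rw [hsum, map_sum, Finset.mul_sum]
          apply Finset.sum_congr rfl
          intro k _
          rw [pow_one, ← hyP k]
        rw [this, hx]
      · have h0 := ihj (by omega)
        have hstep : v * θ (∑ k ∈ F, ((k:ℚ)^j) • y k) = ∑ k ∈ F, ((k:ℚ)^(j+1)) • y k := by
          rw [map_sum, Finset.mul_sum]
          apply Finset.sum_congr rfl
          intro k _
          rw [map_smul, mul_smul_comm, hyP k, smul_smul, ← pow_succ]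
        rw [h0, map_zero, mul_zero] at hstep
        exact hstep.symm
  have hvdm := vandermonde F y hiter
  have hxB : x = ∑ k ∈ F.filter (fun k => k = 0), y k := by
    rw [hsum, ← Finset.sum_filter_add_sum_filter_not F (fun k => k = 0)]
    have : ∑ k ∈ F.filter (fun k => ¬ k = 0), y k = 0 :=
      Finset.sum_eq_zero (fun k hk => hvdm k (Finset.mem_filter.mp hk).1
        (Finset.mem_filter.mp hk).2)
    rw [this, add_zero]
  rw [hxB]
  apply Subalgebra.sum_mem
  intro k hk
  have hk0 : k = 0 := (Finset.mem_filter.mp hk).2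
  obtain ⟨b, hb, hvb⟩ := hy k
  rw [LinearMap.mulLeft_apply] at hvb
  rw [← hvb, hk0]
  simpa using hb

end bsec
end S14

open S14 in
/-- (Halperin's lemma.) A Gottlieb element `v ∈ V^n` that is a
cycle splits off a free factor: `(∧V, d) ≅ (∧(v), 0) ⊗ (∧W, d')`. -/
theorem statement14 (A : Type) [Ring A] [Algebra ℚ A]
    (𝒜 V : ℤ → Submodule ℚ A) (d : A →ₗ[ℚ] A)
    (hS : SullivanData 𝒜 V d)
    (t : ℤ) (v : A) (hv : v ∈ V t)
    (θ : A →ₗ[ℚ] A) (hθ : IsDerCycle 𝒜 d t θ) (hθv : θ v = 1)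
    (hdv : d v = 0) :
    ∃ (W : ℤ → Submodule ℚ A) (d' : A →ₗ[ℚ] A),
      IsGradedComplement V v t W ∧
      IsDegDer 𝒜 (-1) d' ∧ d' ∘ₗ d' = 0 ∧ d' v = 0 ∧
      (∀ a ∈ gradedAdjoin W, d' a ∈ gradedAdjoin W) ∧
      ∃ Φ : A ≃ₐ[ℚ] A, (∀ i : ℤ, ∀ a ∈ 𝒜 i, Φ a ∈ 𝒜 i) ∧
        Φ.toLinearMap ∘ₗ d' = d ∘ₗ Φ.toLinearMap := by
  classical
  rcases subsingleton_or_nontrivial A with hsub | hnt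
  · -- trivial algebra
    have hall : ∀ x : A, x = 0 := fun x => Subsingleton.elim x 0
    refine ⟨V, 0, ⟨fun m => le_rfl, fun m _ => rfl, ?_, ?_⟩, ⟨?_, ?_⟩, ?_, ?_, ?_, ?_⟩
    · rw [sup_eq_left, Submodule.span_le, Set.singleton_subset_iff]
      exact hv
    · apply le_antisymm _ bot_le
      intro x hx
      rw [hall x]; exact zero_mem _
    · intro i a _; exact zero_mem _
    · intro i j a _ b _; simp
    · ext x; simp
    · simp
    · intro a _; simpa using (zero_mem (gradedAdjoin V))
    · refine ⟨AlgEquiv.refl, fun i a ha => ha, ?_⟩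
      ext x
      simp [hall (d x)]
  · -- main case
    obtain ⟨hθd, hcyc⟩ := hθ
    have hv𝒜 : v ∈ 𝒜 t := hS.V_le t hv
    have hvne : v ≠ 0 := by
      intro h
      rw [h, map_zero] at hθv
      exact one_ne_zero hθv.symm
    have ht2 : 2 ≤ t := by
      by_contra h
      push_neg at h
      have hbot : V t = ⊥ := by
        rcases lt_trichotomy t 0 with h0 | h0 | h0
        · exact le_antisymm (le_trans (hS.V_le t) (le_of_eq (hS.neg_bot t h0))) bot_le
        · rw [h0]; exact hS.V_zero
        · have : t = 1 := by omega
          rw [this]; exact hS.V_one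
      rw [hbot] at hv
      exact hvne ((Submodule.mem_bot ℚ).mp hv)
    obtain ⟨Φ, hΦt, hΦn⟩ := S14.exists_Phi hS hθd hv
    have hgr := S14.Phi_grade hS hθd hv hΦt hΦn
    have hJ1 := S14.eta_J hS hv hΦt hΦn
    have hinj := S14.Phi_inj hS hv ht2 hΦt hJ1 hgr
    have hsurj := S14.Phi_surj hS hv ht2 hΦt hJ1 hgr
    set Φe : A ≃ₐ[ℚ] A := AlgEquiv.ofBijective Φ ⟨hinj, hsurj⟩ with hΦe
    have hΦe_apply : ∀ x, Φe x = Φ x := fun x => rfl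
    have hsymm_gr : ∀ m : ℤ, ∀ y ∈ 𝒜 m, Φe.symm y ∈ 𝒜 m := by
      intro m y hy
      obtain ⟨x, hx, hΦx⟩ := S14.Phi_surj_piece hS hv ht2 hΦt hJ1 hgr m y hy
      have : Φe.symm y = x := by
        apply hinj
        show Φ (Φe.symm y) = Φ x
        rw [hΦx, ← hΦe_apply (Φe.symm y), Φe.apply_symm_apply]
      rw [this]; exact hx
    set Wt : Submodule ℚ A := V t ⊓ LinearMap.ker θ with hWtdef
    set W : ℤ → Submodule ℚ A := fun m => if m = t then Wt else V m with hW
    have hWt : W t = Wt := by rw [hW]; simp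
    have hWle : ∀ m, W m ≤ V m := by
      intro m
      by_cases h : m = t
      · subst h; rw [hWt]; exact inf_le_left
      · rw [hW]; simp only [if_neg h]; exact le_rfl
    have hWeq : ∀ m, m ≠ t → W m = V m := by
      intro m h; rw [hW]; simp only [if_neg h]
    have hθVt : ∀ u ∈ V t, ∃ c : ℚ, θ u = c • (1:A) := by
      intro u hu
      have h0 : θ u ∈ 𝒜 0 := by
        have := hθd.maps_mem t u (hS.V_le t hu)
        simpa using this
      exact S14.mem_A0 hS h0
    have hsup : W t ⊔ Submodule.span ℚ {v} = V t := by
      rw [hWt]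
      apply le_antisymm
      · apply sup_le inf_le_left
        rw [Submodule.span_le, Set.singleton_subset_iff]
        exact hv
      · intro u hu
        obtain ⟨c, hc⟩ := hθVt u hu
        have hwk : θ (u - c • v) = 0 := by
          rw [map_sub, map_smul, hθv, hc, sub_self]
        have hw : u - c • v ∈ Wt := ⟨sub_mem hu (Submodule.smul_mem _ _ hv),
          LinearMap.mem_ker.mpr hwk⟩
        have hsplit : u = (u - c • v) + c • v := by abel
        rw [hsplit]
        exact add_mem (Submodule.mem_sup_left hw)
          (Submodule.mem_sup_right (Submodule.smul_mem _ _ (Submodule.mem_span_singleton_self v)))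
    have hinf : W t ⊓ Submodule.span ℚ {v} = ⊥ := by
      rw [hWt]
      rw [eq_bot_iff]
      rintro x ⟨hx1, hx2⟩
      obtain ⟨c, rfl⟩ := Submodule.mem_span_singleton.mp hx2
      have := LinearMap.mem_ker.mp hx1.2
      rw [map_smul, hθv] at this
      have hc : c = 0 := by
        rcases smul_eq_zero.mp this with h | h
        · exact h
        · exact absurd h one_ne_zero
      rw [hc, zero_smul]
      exact zero_mem _
    -- the subalgebra B = Φ(∧W)
    set Bset : Set A := Φ '' (⋃ k : ℤ, (W k : Set A)) with hBset
    set B : Subalgebra ℚ A := Algebra.adjoin ℚ Bset with hB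
    have hWgen : ∀ x ∈ Bset, (v * θ x = 0) ∧ ∃ i : ℤ, x ∈ 𝒜 i := by
      rintro x ⟨u, hu, rfl⟩
      obtain ⟨_, ⟨k, rfl⟩, hu⟩ := hu
      have hu' : u ∈ W k := hu
      constructor
      · by_cases h : k = t
        · subst h
          rw [hWt] at hu'
          rw [hΦt u hu'.1]
          have := LinearMap.mem_ker.mp hu'.2
          rw [this, mul_zero]
        · rw [hWeq k h] at hu'
          by_cases hk0 : 0 ≤ k
          · rw [hΦn k h u hu']
            exact S14.P_sum_zero hS hθd hv𝒜 hθv ht2 (hS.V_le k hu') hk0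
          · have : u = 0 := by
              have := hS.neg_bot k (by omega) ▸ hS.V_le k hu'
              simpa using this
            rw [this, map_zero, map_zero, mul_zero]
      · exact ⟨k, hgr k u (hS.V_le k (hWle k hu'))⟩
    have hPmul := S14.P_mul hS hθd hv𝒜
    have hBk : ∀ b ∈ B, v * θ b = 0 := by
      intro b hb
      rw [hB] at hb
      induction hb using Algebra.adjoin_induction with
      | mem x hx => exact (hWgen x hx).1
      | algebraMap r =>
        rw [Algebra.algebraMap_eq_smul_one, map_smul,
          S14.theta_one hS.one_mem hθd, smul_zero, mul_zero]
      | add x y _ _ ihx ihy => rw [map_add, mul_add, ihx, ihy, add_zero]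
      | mul x y _ _ ihx ihy => rw [hPmul x y, ihx, ihy, zero_mul, mul_zero, add_zero]
    have hBgr := S14.adjoin_graded hS Bset (fun x hx => (hWgen x hx).2)
    have hcommB : ∀ b ∈ B, ∀ l : ℕ,
        b * v^l ∈ Submodule.map (LinearMap.mulLeft ℚ (v^l)) (Subalgebra.toSubmodule B) := by
      intro b hb l
      obtain ⟨F, z, hz, hzsum⟩ := S14.mem_iSup_decomp _ (hBgr b hb)
      rw [hzsum, Finset.sum_mul]
      apply Submodule.sum_mem
      intro i _
      have hzi := hz i
      have hco : z i * v^l = ((-1:ℚ)^(i * ((l:ℤ)*t))) • (v^l * z i) :=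
        hS.gcomm i ((l:ℤ)*t) (z i) hzi.2 (v^l) (S14.vpow_mem hS hv𝒜 l)
      rw [hco]
      exact Submodule.smul_mem _ _ ⟨z i, hzi.1, rfl⟩
    set Mf : ℕ → Submodule ℚ A := fun k =>
      Submodule.map (LinearMap.mulLeft ℚ (v^k)) (Subalgebra.toSubmodule B) with hMf
    set M : Submodule ℚ A := ⨆ k, Mf k with hM
    have hMv : ∀ (k : ℕ) (x : A), x ∈ M → v^k * x ∈ M := by
      intro k x hx
      refine Submodule.iSup_induction (motive := fun x => v^k * x ∈ M) Mf hx ?_ ?_ ?_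
      · rintro l x ⟨b, hb, rfl⟩
        refine Submodule.mem_iSup_of_mem (k+l) ⟨b, hb, ?_⟩
        show v^(k+l) * b = v^k * (LinearMap.mulLeft ℚ (v^l)) b
        rw [LinearMap.mulLeft_apply, ← mul_assoc, ← pow_add]
      · show v^k * 0 ∈ M
        rw [mul_zero]; exact zero_mem _
      · intro a b ha hb
        rw [mul_add]; exact add_mem ha hb
    have hMone : (1:A) ∈ M :=
      Submodule.mem_iSup_of_mem 0 ⟨1, one_mem B, by simp⟩
    have hMmul : ∀ x y : A, x ∈ M → y ∈ M → x * y ∈ M := by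
      intro x y hx hy
      refine S14.iSup_mul Mf (· + ·) ?_ hx hy
      rintro k l x' ⟨b, hb, rfl⟩ y' ⟨b', hb', rfl⟩
      have := hcommB b hb l
      obtain ⟨b₂, hb₂, hbv⟩ := this
      rw [LinearMap.mulLeft_apply] at hbv
      refine ⟨b₂ * b', Subalgebra.mul_mem B hb₂ hb', ?_⟩
      show v^(k+l) * (b₂ * b') = (LinearMap.mulLeft ℚ (v^k)) b * (LinearMap.mulLeft ℚ (v^l)) b'
      rw [LinearMap.mulLeft_apply, LinearMap.mulLeft_apply]
      calc v^(k+l) * (b₂ * b') = (v^k * (v^l * b₂)) * b' := by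
            rw [← mul_assoc, ← mul_assoc, ← pow_add]
      _ = (v^k * (b * v^l)) * b' := by rw [hbv]
      _ = (v^k * b) * (v^l * b') := by rw [← mul_assoc, ← mul_assoc, mul_assoc (v^k)]
    have hVstep : ∀ n : ℤ, (∀ j : ℤ, j < n → 𝒜 j ≤ M) → V n ≤ M := by
      intro n hlow u hu
      by_cases h : n = t
      · rw [h] at hu
        obtain ⟨c, hc⟩ := hθVt u hu
        have hwk : θ (u - c • v) = 0 := by rw [map_sub, map_smul, hθv, hc, sub_self]
        have hw : u - c • v ∈ Wt := ⟨sub_mem hu (Submodule.smul_mem _ _ hv),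
          LinearMap.mem_ker.mpr hwk⟩
        have hwW : u - c • v ∈ W t := by rw [hWt]; exact hw
        have hwB : u - c • v ∈ B :=
          Algebra.subset_adjoin ⟨u - c • v, Set.mem_iUnion.mpr ⟨t, hwW⟩, hΦt _ hw.1⟩
        have hwM : u - c • v ∈ M := Submodule.mem_iSup_of_mem 0 ⟨_, hwB, by simp⟩
        have hvM : c • v ∈ M := by
          refine Submodule.mem_iSup_of_mem 1 ⟨c • 1, Submodule.smul_mem _ _ (one_mem B), ?_⟩
          show v^1 * (c • 1) = c • v
          rw [pow_one, mul_smul_comm, mul_one]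
        have : u = (u - c • v) + c • v := by abel
        rw [this]
        exact add_mem hwM hvM
      · by_cases hn : 0 ≤ n
        · have hΦu : Φ u ∈ B := by
            apply Algebra.subset_adjoin
            refine ⟨u, Set.mem_iUnion.mpr ⟨n, ?_⟩, rfl⟩
            show u ∈ W n
            rw [hWeq n h]; exact hu
          have hus : u = Φ u - ∑ k ∈ Finset.range n.toNat,
              gam (k+1) • (v^(k+1) * ((θ^(k+1) : A →ₗ[ℚ] A)) u) := by
            rw [hΦn n h u hu, Finset.sum_range_succ']
            have h0 : S14.gam 0 • (v^0 * ((θ^0 : A →ₗ[ℚ] A)) u) = u := by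
              simp [S14.gam_zero]
            rw [h0]
            abel
          rw [hus]
          apply sub_mem
          · exact Submodule.mem_iSup_of_mem 0 ⟨Φ u, hΦu, by simp⟩
          · apply Submodule.sum_mem
            intro k _
            apply Submodule.smul_mem
            have hθk : ((θ^(k+1) : A →ₗ[ℚ] A)) u ∈ 𝒜 (n - ((k+1:ℕ):ℤ)*t) :=
              S14.theta_pow_mem hθd (k+1) n u (hS.V_le n hu)
            have hlt : n - ((k+1:ℕ):ℤ)*t < n := by
              have hpos : (0:ℤ) < ((k+1:ℕ):ℤ)*t := by
                have : (0:ℤ) < ((k+1:ℕ):ℤ) := by positivity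
                nlinarith
              omega
            exact hMv (k+1) _ (hlow _ hlt hθk)
        · have : u = 0 := by
            have := hS.neg_bot n (by omega) ▸ hS.V_le n hu
            simpa using this
          rw [this]; exact zero_mem _
    have hMtop : ∀ a : A, a ∈ M := by
      intro a
      have hall := S14.grade_le_of hS M hMone hMmul hVstep
      obtain ⟨F, c, hc, hsum⟩ := S14.exists_decomp hS.internal a
      rw [hsum]
      exact Submodule.sum_mem _ (fun i _ => hall i (hc i))
    have hSB : ∀ x : A, v * θ x = 0 → x ∈ B := by
      intro x hx
      exact S14.ker_le_B hS hθd hv𝒜 hθv B hBk (fun a => hMtop a) hx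
    have hdS : ∀ x : A, v * θ x = 0 → v * θ (d x) = 0 := by
      intro x hx
      rw [← S14.dP hS hv𝒜 hdv hcyc x, hx, map_zero]
    -- assembly
    set d' : A →ₗ[ℚ] A := Φe.symm.toLinearMap ∘ₗ d ∘ₗ Φe.toLinearMap with hd'
    have hd'app : ∀ x, d' x = Φe.symm (d (Φ x)) := fun x => rfl
    have hΦsymmΦ : ∀ x, Φe.symm (Φ x) = x := by
      intro x
      rw [← hΦe_apply x, Φe.symm_apply_apply]
    have hΦΦsymm : ∀ x, Φ (Φe.symm x) = x := by
      intro x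
      rw [← hΦe_apply (Φe.symm x), Φe.apply_symm_apply]
    have hmapB : ∀ a ∈ gradedAdjoin W, Φ a ∈ B := by
      intro a ha
      have : B = Subalgebra.map Φ (gradedAdjoin W) := by
        rw [hB, hBset, gradedAdjoin, AlgHom.map_adjoin]
      rw [this]
      exact Subalgebra.mem_map.mpr ⟨a, ha, rfl⟩
    have hBmap : ∀ b ∈ B, ∃ a ∈ gradedAdjoin W, Φ a = b := by
      intro b hb
      have hBeq : B = Subalgebra.map Φ (gradedAdjoin W) := by
        rw [hB, hBset, gradedAdjoin, AlgHom.map_adjoin]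
      rw [hBeq] at hb
      obtain ⟨a, ha, rfl⟩ := Subalgebra.mem_map.mp hb
      exact ⟨a, ha, rfl⟩
    refine ⟨W, d', ⟨hWle, hWeq, hsup, hinf⟩, ⟨?_, ?_⟩, ?_, ?_, ?_, ?_⟩
    · -- maps_mem
      intro i a ha
      rw [hd'app]
      exact hsymm_gr _ _ (hS.d_der.maps_mem i (Φ a) (hgr i a ha))
    · -- leibniz
      intro i j a ha b hb
      rw [hd'app, hd'app, hd'app, map_mul,
        hS.d_der.leibniz i j (Φ a) (hgr i a ha) (Φ b) (hgr j b hb),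
        map_add, map_smul, map_mul, map_mul, hΦsymmΦ, hΦsymmΦ]
    · -- d' ∘ d' = 0
      ext x
      show d' (d' x) = 0
      rw [hd'app, hd'app, hΦΦsymm]
      have := LinearMap.congr_fun hS.d_squared (Φ x)
      rw [LinearMap.comp_apply, LinearMap.zero_apply] at this
      rw [this, map_zero]
    · -- d' v = 0
      rw [hd'app, hΦt v hv, hdv, map_zero]
    · -- stability of ∧W
      intro a ha
      have h1 : Φ a ∈ B := hmapB a ha
      have h2 : v * θ (d (Φ a)) = 0 := hdS _ (hBk _ h1)
      have h3 : d (Φ a) ∈ B := hSB _ h2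
      obtain ⟨w', hw', hww⟩ := hBmap _ h3
      have : d' a = w' := by
        rw [hd'app, ← hww, hΦsymmΦ]
      rw [this]
      exact hw'
    · refine ⟨Φe, fun i a ha => hgr i a ha, ?_⟩
      ext x
      show Φe (d' x) = d (Φe x)
      rw [hΦe_apply, hd'app, hΦΦsymm, hΦe_apply]

-- #print axioms statement14
end

section
/- In the setting of the odd-degree change of basis (a simply connected Sullivan minimal model (∧V, d) with Gottlieb element x ∈ V^{2n+1}, derivation cycle θ of degree 2n+1 with θ(x) = 1, graded complement W of ⟨x⟩, automorphism φ with φ(x) = x and φ(v) = v − xθ(v) for v ∈ W, and d' = φ⁻¹∘d∘φ), decompose d' on ∧W by writing d'(χ) = x·d'₁(χ) + d'₀(χ) for χ ∈ ∧W, where d'₁ and d'₀ are derivations of ∧W. Then the identities [d'₁, d'₀] = 0 and d'₀∘d'₀ + μ_{dx}∘d'₁ = 0 hold, where μ_{dx} denotes multiplication by dx = d'(x) ∈ ∧W. -/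
variable {A : Type} [Ring A] [Algebra ℚ A]

/-- (Remark, odd case (3).) Writing `d'(χ) = x·d'₁(χ) + d'₀(χ)`
on `∧W` after the odd change of basis, one has `[d'₁, d'₀] = 0` and
`d'₀ ∘ d'₀ + μ_{dx} ∘ d'₁ = 0`. -/
theorem statement15 (A : Type) [Ring A] [Algebra ℚ A]
    (𝒜 V : ℤ → Submodule ℚ A) (d : A →ₗ[ℚ] A)
    (hS : SullivanData 𝒜 V d)
    (n : ℕ) (x : A) (hx : x ∈ V (2 * (n : ℤ) + 1))
    (θ : A →ₗ[ℚ] A) (hθ : IsDerCycle 𝒜 d (2 * (n : ℤ) + 1) θ) (hθx : θ x = 1)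
    (W : ℤ → Submodule ℚ A) (hW : IsGradedComplement V x (2 * (n : ℤ) + 1) W)
    (φ : A ≃ₐ[ℚ] A) (hφx : φ x = x)
    (hφW : ∀ m : ℤ, ∀ v ∈ W m, φ v = v - x * θ v)
    (d' : A →ₗ[ℚ] A) (hd' : d' = φ.symm.toLinearMap ∘ₗ d ∘ₗ φ.toLinearMap)
    (d₁ d₀ : A →ₗ[ℚ] A)
    (h₁mem : ∀ χ ∈ gradedAdjoin W, d₁ χ ∈ gradedAdjoin W)
    (h₀mem : ∀ χ ∈ gradedAdjoin W, d₀ χ ∈ gradedAdjoin W)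
    (hdecomp : ∀ χ ∈ gradedAdjoin W, d' χ = x * d₁ χ + d₀ χ) :
    (∀ χ ∈ gradedAdjoin W, d₁ (d₀ χ) - d₀ (d₁ χ) = 0) ∧
    (∀ χ ∈ gradedAdjoin W, d₀ (d₀ χ) + d' x * d₁ χ = 0) := by
  classical
  by_cases htriv : (1 : A) = 0
  · have hall : ∀ a : A, a = 0 := fun a => by rw [← mul_one a, htriv, mul_zero]
    exact ⟨fun χ _ => hall _, fun χ _ => hall _⟩
  obtain ⟨hθder, hθcyc⟩ := hθ
  set t : ℤ := 2 * (n : ℤ) + 1 with ht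
  have hoddt : Odd t := ⟨(n : ℤ), ht⟩
  have hx𝒜 : x ∈ 𝒜 t := hS.V_le _ hx
  have hsgn : ∀ k : ℤ, Odd k → ((-1 : ℚ)) ^ k = -1 := fun _ hk => hk.neg_one_zpow
  have h1𝒜 : (1 : A) ∈ 𝒜 0 := hS.one_mem
  -- d 1 = 0 and θ 1 = 0
  have hd1 : d (1 : A) = 0 := by
    have h := hS.d_der.leibniz 0 0 1 h1𝒜 1 h1𝒜
    simp only [one_mul, mul_one, zero_mul, zpow_zero, one_smul] at h
    exact left_eq_add.mp h
  have hθ1 : θ (1 : A) = 0 := by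
    have h := hθder.leibniz 0 0 1 h1𝒜 1 h1𝒜
    simp only [one_mul, mul_one, zero_mul, zpow_zero, one_smul] at h
    exact left_eq_add.mp h
  -- x * x = 0
  have hxx : x * x = 0 := by
    have h := hS.gcomm t t x hx𝒜 x hx𝒜
    rw [hsgn _ (hoddt.mul hoddt), neg_one_smul] at h
    have h2 : (2 : ℚ) • (x * x) = 0 := by
      rw [two_smul]
      rw [eq_neg_iff_add_eq_zero] at h
      exact h
    rcases smul_eq_zero.mp h2 with h3 | h3
    · exact absurd h3 (by norm_num)
    · exact h3
  -- induction principle from the internal grading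
  have hind : ∀ p : A → Prop, p 0 → (∀ a b, p a → p b → p (a + b)) →
      (∀ i : ℤ, ∀ a ∈ 𝒜 i, p a) → ∀ z, p z := by
    intro p h0 hadd hhom z
    have hz : z ∈ ⨆ i, 𝒜 i := by
      rw [hS.internal.submodule_iSup_eq_top]; trivial
    exact Submodule.iSup_induction 𝒜 (motive := p) hz hhom h0 hadd
  -- Leibniz rules for multiplication by x
  have L1 : ∀ c, d (x * c) = d x * c - x * d c := by
    refine hind (fun c => d (x * c) = d x * c - x * d c) (by simp) ?_ ?_
    · intro a b ha hb
      simp only [mul_add, map_add, ha, hb]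
      abel
    · intro j c hc
      have h := hS.d_der.leibniz t j x hx𝒜 c hc
      rw [hsgn (t * (-1)) (by rw [mul_neg_one]; exact hoddt.neg), neg_one_smul] at h
      rw [h]; abel
  have L2 : ∀ c, θ (x * c) = c - x * θ c := by
    refine hind (fun c => θ (x * c) = c - x * θ c) (by simp) ?_ ?_
    · intro a b ha hb
      simp only [mul_add, map_add, ha, hb]
      abel
    · intro j c hc
      have h := hθder.leibniz t j x hx𝒜 c hc
      rw [hsgn (t * t) (hoddt.mul hoddt), neg_one_smul, hθx, one_mul] at h
      rw [h]; abel
  -- the ideal I = x * A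
  set I : Submodule ℚ A := LinearMap.range (LinearMap.mulLeft ℚ x) with hIdef
  have memI : ∀ y, x * y ∈ I := fun y => LinearMap.mem_range.mpr ⟨y, by
    simp [LinearMap.mulLeft_apply]⟩
  have hIel : ∀ z ∈ I, ∃ y, x * y = z := by
    intro z hz
    obtain ⟨y, hy⟩ := LinearMap.mem_range.mp hz
    exact ⟨y, by simpa [LinearMap.mulLeft_apply] using hy⟩
  have L3 : ∀ c, ∀ z ∈ I, c * z ∈ I := by
    refine hind (fun c => ∀ z ∈ I, c * z ∈ I) ?_ ?_ ?_
    · intro z hz; rw [zero_mul]; exact I.zero_mem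
    · intro a b ha hb z hz
      rw [add_mul]; exact I.add_mem (ha z hz) (hb z hz)
    · intro j c hc z hz
      obtain ⟨y, hy⟩ := hIel z hz
      have hcx : c * x = ((-1 : ℚ) ^ (j * t)) • (x * c) := hS.gcomm j t c hc x hx𝒜
      have hrw : c * (x * y) = ((-1 : ℚ) ^ (j * t)) • (x * (c * y)) := by
        rw [← mul_assoc, hcx, smul_mul_assoc, mul_assoc]
      rw [← hy, hrw]
      exact I.smul_mem _ (memI _)
  -- φ facts
  have hφsx : φ.symm x = x := by
    apply φ.injective
    rw [φ.apply_symm_apply, hφx]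
  have hφmulx : ∀ y, φ.symm (x * y) = x * φ.symm y := by
    intro y
    apply φ.injective
    rw [φ.apply_symm_apply, map_mul, hφx, φ.apply_symm_apply]
  -- d' facts
  have hd'app : ∀ z, d' z = φ.symm (d (φ z)) := by intro z; rw [hd']; rfl
  have hd'x : d' x = φ.symm (d x) := by rw [hd'app, hφx]
  have hddz : ∀ z, d (d z) = 0 := by
    intro z
    have h := LinearMap.ext_iff.mp hS.d_squared z
    simpa using h
  have hd'sq : ∀ z, d' (d' z) = 0 := by
    intro z
    rw [hd'app, hd'app, φ.apply_symm_apply, hddz, map_zero]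
  have hd'mulx : ∀ c, d' (x * c) = d' x * c - x * d' c := by
    intro c
    rw [hd'app, map_mul, hφx, L1, map_sub, map_mul, φ.symm_apply_apply, hφmulx,
      ← hd'app, ← hd'x]
  -- θ' = φ⁻¹ ∘ θ ∘ φ
  set θ' : A → A := fun z => φ.symm (θ (φ z)) with hθ'set
  have hθ'def : ∀ z, θ' z = φ.symm (θ (φ z)) := fun _ => rfl
  have hθ'0 : θ' 0 = 0 := by rw [hθ'def]; simp
  have hθ'add : ∀ a b, θ' (a + b) = θ' a + θ' b := by
    intro a b; simp [hθ'def, map_add]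
  have hθ'smul : ∀ (r : ℚ) a, θ' (r • a) = r • θ' a := by
    intro r a; simp [hθ'def, map_smul]
  have hθ'mulx : ∀ c, θ' (x * c) = c - x * θ' c := by
    intro c
    rw [hθ'def, map_mul, hφx, L2, map_sub, φ.symm_apply_apply, hφmulx, ← hθ'def]
  have hdθ : ∀ a, θ (d a) = - d (θ a) := by
    intro a
    have h := LinearMap.ext_iff.mp hθcyc a
    rw [Dcomm] at h
    simp only [LinearMap.sub_apply, LinearMap.smul_apply, LinearMap.coe_comp,
      Function.comp_apply, LinearMap.zero_apply, hsgn t hoddt, neg_one_smul,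
      sub_neg_eq_add] at h
    exact eq_neg_of_add_eq_zero_right h
  have hθ'd'x : θ' (d' x) = 0 := by
    rw [hθ'def, hd'x, φ.apply_symm_apply, hdθ, hθx, hd1, neg_zero, map_zero]
  -- abbreviation for ∧W
  set S := gradedAdjoin W with hSdef
  have hsubadj : ∀ (k : ℤ) (w : A), w ∈ W k → w ∈ S :=
    fun k w hw => Algebra.subset_adjoin (Set.mem_iUnion.mpr ⟨k, hw⟩)
  -- x is nonzero and not in the span of the W's
  have hx0 : x ≠ 0 := by
    intro h
    rw [h, map_zero] at hθx
    exact htriv hθx.symm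
  have hxWt : x ∉ W t := by
    intro hxw
    have hmem : x ∈ W t ⊓ Submodule.span ℚ {x} :=
      ⟨hxw, Submodule.mem_span_singleton_self x⟩
    rw [hW.2.2.2] at hmem
    exact hx0 hmem
  set N : Submodule ℚ A := ⨆ m, W m with hNdef
  have hWleN : ∀ (m : ℤ) (w : A), w ∈ W m → w ∈ N := fun m w hw => (le_iSup W m) hw
  have hxN : x ∉ N := by
    intro hxn
    have hle : N ≤ W t ⊔ ⨆ j, ⨆ _ : j ≠ t, 𝒜 j := by
      refine iSup_le fun m => ?_
      by_cases hm : m = t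
      · subst hm; exact le_sup_left
      · exact le_trans (le_trans (hW.1 m) (hS.V_le m))
          (le_sup_of_le_right (le_iSup₂ (f := fun j (_ : j ≠ t) => 𝒜 j) m hm))
    obtain ⟨w, hw, r, hr, hwr⟩ := Submodule.mem_sup.mp (hle hxn)
    have hr𝒜 : r ∈ 𝒜 t := by
      have hreq : r = x - w := by rw [← hwr]; abel
      rw [hreq]
      exact Submodule.sub_mem _ hx𝒜 (hS.V_le t (hW.1 t hw))
    have hrz : r = 0 :=
      (Submodule.disjoint_def.mp (hS.internal.submodule_iSupIndep t)) r hr𝒜 hr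
    have hxw : x = w := by rw [← hwr, hrz, add_zero]
    exact hxWt (hxw ▸ hw)
  -- a linear functional c with c x = 1 vanishing on N
  have hxq : (N.mkQ x : A ⧸ N) ≠ 0 := by
    simpa [Submodule.mkQ_apply, Submodule.Quotient.mk_eq_zero] using hxN
  obtain ⟨g0, hg0⟩ := LinearMap.exists_leftInverse_of_injective
    (LinearMap.toSpanSingleton ℚ (A ⧸ N) (N.mkQ x))
    (LinearMap.ker_toSpanSingleton ℚ hxq)
  set c : A →ₗ[ℚ] ℚ := g0 ∘ₗ N.mkQ with hcdef
  have hcx : c x = 1 := by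
    have h := LinearMap.ext_iff.mp hg0 1
    simpa [LinearMap.toSpanSingleton_apply, hcdef] using h
  have hcN : ∀ z ∈ N, c z = 0 := by
    intro z hz
    have : N.mkQ z = 0 := by
      simpa [Submodule.mkQ_apply, Submodule.Quotient.mk_eq_zero] using hz
    simp [hcdef, this]
  -- the projection f and the algebra map g killing x
  set f : A →ₗ[ℚ] A := LinearMap.id - LinearMap.smulRight c x with hfdef
  have hfapp : ∀ a, f a = a - c a • x := fun a => rfl
  have hfV : ∀ m : ℤ, ∀ v ∈ V m, f v ∈ 𝒜 m := by
    intro m v hv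
    by_cases hm : m = t
    · subst hm
      rw [hfapp]
      exact Submodule.sub_mem _ (hS.V_le t hv) (Submodule.smul_mem _ _ hx𝒜)
    · have hvW : v ∈ W m := by rw [hW.2.1 m hm]; exact hv
      rw [hfapp, hcN v (hWleN m v hvW), zero_smul, sub_zero]
      exact hS.V_le m hv
  obtain ⟨g, hgspec, -⟩ := hS.free { carrier := A, grading := 𝒜 } hS.gcomm f hfV
  have hgx : g x = 0 := by
    rw [hgspec t x hx, hfapp, hcx, one_smul, sub_self]
  have hgw : ∀ (m : ℤ) (w : A), w ∈ W m → g w = w := by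
    intro m w hw
    rw [hgspec m w (hW.1 m hw), hfapp, hcN w (hWleN m w hw), zero_smul, sub_zero]
  have hgI : ∀ z ∈ I, g z = 0 := by
    intro z hz
    obtain ⟨y, hy⟩ := hIel z hz
    rw [← hy, map_mul, hgx, zero_mul]
  have hgS : ∀ s ∈ S, g s = s := by
    intro s hs
    induction hs using Algebra.adjoin_induction with
    | mem a ha =>
      obtain ⟨k, ha⟩ := Set.mem_iUnion.mp ha
      exact hgw k a ha
    | algebraMap r => exact g.commutes r
    | add a b _ _ ha hb => rw [map_add, ha, hb]
    | mul a b _ _ ha hb => rw [map_mul, ha, hb]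
  have hztop : ∀ z : A, z ∈ Algebra.adjoin ℚ (⋃ n : ℤ, (V n : Set A)) := by
    intro z; rw [hS.gen]; trivial
  have hgV : ∀ m : ℤ, ∀ v ∈ V m, g v ∈ S := by
    intro m v hv
    by_cases hm : m = t
    · subst hm
      rw [← hW.2.2.1] at hv
      obtain ⟨w, hw, r, hr, hwr⟩ := Submodule.mem_sup.mp hv
      obtain ⟨q, rfl⟩ := Submodule.mem_span_singleton.mp hr
      rw [← hwr, map_add, map_smul, hgx, smul_zero, add_zero, hgw t w hw]
      exact hsubadj t w hw
    · have hvW : v ∈ W m := by rw [hW.2.1 m hm]; exact hv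
      rw [hgw m v hvW]
      exact hsubadj m v hvW
  have hgrange : ∀ z, g z ∈ S := by
    intro z
    induction hztop z using Algebra.adjoin_induction with
    | mem a ha =>
      obtain ⟨m, ha⟩ := Set.mem_iUnion.mp ha
      exact hgV m a ha
    | algebraMap r => rw [g.commutes]; exact S.algebraMap_mem r
    | add a b _ _ ha hb => rw [map_add]; exact S.add_mem ha hb
    | mul a b _ _ ha hb => rw [map_mul]; exact S.mul_mem ha hb
  -- every element is congruent to its projection modulo I
  have hsub : ∀ z, z - g z ∈ I := by
    intro z
    induction hztop z using Algebra.adjoin_induction with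
    | mem a ha =>
      obtain ⟨m, ha⟩ := Set.mem_iUnion.mp ha
      rw [hgspec m a ha, hfapp]
      have hrw : a - (a - c a • x) = c a • x := by abel
      rw [hrw]
      exact I.smul_mem _ (by simpa using memI 1)
    | algebraMap r => rw [g.commutes, sub_self]; exact I.zero_mem
    | add a b _ _ ha hb =>
      have hrw : a + b - g (a + b) = (a - g a) + (b - g b) := by
        rw [map_add]; abel
      rw [hrw]; exact I.add_mem ha hb
    | mul a b _ _ ha hb =>
      have hrw : a * b - g (a * b) = (a - g a) * b + g a * (b - g b) := by
        rw [map_mul, sub_mul, mul_sub]; abel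
      rw [hrw]
      refine I.add_mem ?_ (L3 _ _ hb)
      obtain ⟨y, hy⟩ := hIel _ ha
      rw [← hy, mul_assoc]
      exact memI _
  -- θ' maps ∧W into I
  have hclos : ∀ m ∈ Submonoid.closure (⋃ k : ℤ, (W k : Set A)),
      ∃ i : ℤ, m ∈ 𝒜 i ∧ φ m ∈ 𝒜 i ∧ θ' m ∈ I := by
    intro m hm
    induction hm using Submonoid.closure_induction with
    | mem w hw =>
      obtain ⟨k, hw⟩ := Set.mem_iUnion.mp hw
      have hw𝒜 : w ∈ 𝒜 k := hS.V_le k (hW.1 k hw)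
      refine ⟨k, hw𝒜, ?_, ?_⟩
      · rw [hφW k w hw]
        refine Submodule.sub_mem _ hw𝒜 ?_
        have hmm := hS.mul_mem t (k - t) x hx𝒜 (θ w) (hθder.maps_mem k w hw𝒜)
        have hkk : t + (k - t) = k := by ring
        rwa [hkk] at hmm
      · rw [hθ'def, hφW k w hw, map_sub, L2, sub_sub_cancel, hφmulx]
        exact memI _
    | one =>
      refine ⟨0, h1𝒜, by rw [map_one]; exact h1𝒜, ?_⟩
      rw [hθ'def, map_one, hθ1, map_zero]
      exact I.zero_mem
    | mul m₁ m₂ hm₁ hm₂ ih₁ ih₂ =>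
      obtain ⟨i, hi, hφi, hθ'1⟩ := ih₁
      obtain ⟨j, hj, hφj, hθ'2⟩ := ih₂
      refine ⟨i + j, hS.mul_mem i j _ hi _ hj,
        by rw [map_mul]; exact hS.mul_mem i j _ hφi _ hφj, ?_⟩
      rw [hθ'def, map_mul, hθder.leibniz i j _ hφi _ hφj, map_add, map_smul,
        map_mul, map_mul, φ.symm_apply_apply, φ.symm_apply_apply]
      refine I.add_mem ?_ (I.smul_mem _ (L3 m₁ _ ?_))
      · obtain ⟨y, hy⟩ := hIel _ hθ'1
        rw [hθ'def] at hy
        rw [← hy, mul_assoc]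
        exact memI _
      · rw [← hθ'def]
        exact hθ'2
  have hθ'S : ∀ s ∈ S, θ' s ∈ I := by
    intro s hs
    have hs' : s ∈ Submodule.span ℚ
        ((Submonoid.closure (⋃ k : ℤ, (W k : Set A)) : Submonoid A) : Set A) := by
      rw [← Algebra.adjoin_eq_span]
      exact hs
    clear hs
    induction hs' using Submodule.span_induction with
    | mem m hm => obtain ⟨i, -, -, h⟩ := hclos m hm; exact h
    | zero => rw [hθ'0]; exact I.zero_mem
    | add a b _ _ ha hb => rw [hθ'add]; exact I.add_mem ha hb
    | smul r a _ ha => rw [hθ'smul]; exact I.smul_mem r ha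
  -- d' x lies in ∧W
  have hd'xS : d' x ∈ S := by
    obtain ⟨y, hy⟩ := hIel _ (hsub (d' x))
    have hz : d' x = g (d' x) + x * y := by rw [hy]; abel
    have h1 : θ' (g (d' x) + x * y) = 0 := by rw [← hz]; exact hθ'd'x
    rw [hθ'add, hθ'mulx] at h1
    have hy' : y = x * θ' y - θ' (g (d' x)) := by
      have h2 : y - (x * θ' y - θ' (g (d' x))) = 0 := by rw [← h1]; abel
      exact sub_eq_zero.mp h2
    have hyI : y ∈ I := by
      rw [hy']
      exact I.sub_mem (memI _) (hθ'S _ (hgrange _))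
    obtain ⟨y2, hy2⟩ := hIel _ hyI
    have hz0 : d' x - g (d' x) = 0 := by
      rw [← hy, ← hy2, ← mul_assoc, hxx, zero_mul]
    have hzg : d' x = g (d' x) := by rwa [sub_eq_zero] at hz0
    rw [hzg]
    exact hgrange _
  -- the key identity
  have key : ∀ χ ∈ S,
      x * (d₁ (d₀ χ) - d₀ (d₁ χ)) + (d' x * d₁ χ + d₀ (d₀ χ)) = 0 := by
    intro χ hχ
    have h0 : d' (d' χ) = 0 := hd'sq χ
    rw [hdecomp χ hχ, map_add, hd'mulx, hdecomp _ (h₁mem χ hχ),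
      hdecomp _ (h₀mem χ hχ), mul_add, ← mul_assoc, hxx, zero_mul, zero_add] at h0
    rw [← h0, mul_sub]
    abel
  have main : ∀ χ ∈ S,
      d₁ (d₀ χ) - d₀ (d₁ χ) = 0 ∧ d' x * d₁ χ + d₀ (d₀ χ) = 0 := by
    intro χ hχ
    have hk := key χ hχ
    set E := d₁ (d₀ χ) - d₀ (d₁ χ) with hE
    set F := d' x * d₁ χ + d₀ (d₀ χ) with hF
    have hES : E ∈ S := S.sub_mem (h₁mem _ (h₀mem χ hχ)) (h₀mem _ (h₁mem χ hχ))
    have hFS : F ∈ S := S.add_mem (S.mul_mem hd'xS (h₁mem χ hχ)) (h₀mem _ (h₀mem χ hχ))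
    have hF0 : F = 0 := by
      have hg := congrArg g hk
      rw [map_add, map_mul, hgx, zero_mul, zero_add, hgS F hFS, map_zero] at hg
      exact hg
    have hxE : x * E = 0 := by
      rw [hF0, add_zero] at hk
      exact hk
    have h1 : θ' (x * E) = 0 := by rw [hxE, hθ'0]
    rw [hθ'mulx] at h1
    have hEx : E = x * θ' E := sub_eq_zero.mp h1
    have hE0 : E = 0 := by
      have hg := congrArg g hEx
      rw [hgS E hES, map_mul, hgx, zero_mul] at hg
      exact hg
    exact ⟨hE0, hF0⟩
  refine ⟨fun χ hχ => (main χ hχ).1, fun χ hχ => ?_⟩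
  rw [add_comm]
  exact (main χ hχ).2
end
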